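/- arXiv:math/9904116 — 7 statements merged into one kernel-verified Lean document; each statement's English description precedes it below -/
import Mathlib

section
/- For every integer n ≥ 1, the operators S_{n,0}, …, S_{n,n−1} on L²([0,1)) satisfy Σ_{j=0}^{n−1} S_{n,j} ∘ S_{n,j}* = id, the identity operator on L²([0,1)). -/
open MeasureTheory

noncomputable section

/-- Lebesgue measure restricted to `[0,1)`. -/
abbrev μ01 : Measure ℝ := volume.restrict (Set.Ico (0 : ℝ) 1)

/-- The Hilbert space `L²([0,1))` of square-integrable functions on `[0,1)`. -/
abbrev L2I : Type := Lp ℂ 2 μ01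

/-- `IsShiftOp n j S` says that the bounded operator `S` on `L²([0,1))` is given by the
formula `(Sξ)(t) = √n · ξ(n·t − j)` for `t ∈ [j/n, (j+1)/n)` and `(Sξ)(t) = 0` otherwise;
i.e. `S` is the operator `S_{n,j}`. -/
def IsShiftOp (n j : ℕ) (S : L2I →L[ℂ] L2I) : Prop :=
  ∀ ξ : L2I, (S ξ : ℝ → ℂ) =ᵐ[μ01] fun t : ℝ =>
    if (j : ℝ) / n ≤ t ∧ t < ((j : ℝ) + 1) / n
      then (Real.sqrt n : ℂ) * (ξ : ℝ → ℂ) (n * t - j)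
      else 0

namespace Stmt2Aux

local notation "⟪" x ", " y "⟫" => @inner ℂ _ _ x y

open ENNReal

variable {n j : ℕ}

/-- The interval `[j/n, (j+1)/n)`. -/
def Ij (n j : ℕ) : Set ℝ := Set.Ico ((j : ℝ) / n) (((j : ℝ) + 1) / n)

lemma ncast_pos (hn : 1 ≤ n) : (0 : ℝ) < n := by
  exact_mod_cast Nat.pos_of_ne_zero (by omega)

/-- The affine measurable equivalence `s ↦ (s + j)/n`. -/
def eqv (n j : ℕ) (hn : 1 ≤ n) : ℝ ≃ᵐ ℝ :=
  (MeasurableEquiv.addRight (j : ℝ)).trans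
    (MeasurableEquiv.mulLeft₀ ((n : ℝ)⁻¹) (inv_ne_zero (ncast_pos hn).ne'))

lemma eqv_apply (hn : 1 ≤ n) (s : ℝ) : eqv n j hn s = (n : ℝ)⁻¹ * (s + j) := rfl

lemma eqv_arg (hn : 1 ≤ n) (s : ℝ) : (n : ℝ) * ((n : ℝ)⁻¹ * (s + j)) - j = s := by
  have := (ncast_pos hn).ne'
  field_simp
  ring

lemma preimage_Ij (hn : 1 ≤ n) : (eqv n j hn) ⁻¹' (Ij n j) = Set.Ico (0 : ℝ) 1 := by
  have hn0 := ncast_pos hn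
  ext s
  simp only [Ij, Set.mem_preimage, eqv_apply, Set.mem_Ico, inv_mul_eq_div,
    div_le_div_iff_of_pos_right hn0, div_lt_div_iff_of_pos_right hn0]
  constructor <;> rintro ⟨h1, h2⟩ <;> constructor <;> linarith

lemma map_eqv (hn : 1 ≤ n) :
    Measure.map (eqv n j hn) μ01 = (n : ℝ≥0∞) • volume.restrict (Ij n j) := by
  have hn0 := ncast_pos hn
  ext A hA
  rw [MeasurableEquiv.map_apply, Measure.smul_apply,
    Measure.restrict_apply (hA.preimage (eqv n j hn).measurable),
    Measure.restrict_apply hA, ← preimage_Ij (j := j) hn, ← Set.preimage_inter]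
  have hco : ⇑(eqv n j hn) = (fun x : ℝ => (n : ℝ)⁻¹ * x) ∘ (fun x : ℝ => x + (j : ℝ)) := rfl
  rw [hco, Set.preimage_comp, measure_preimage_add_right,
    Real.volume_preimage_mul_left (inv_ne_zero hn0.ne'), inv_inv,
    abs_of_pos hn0, ENNReal.ofReal_natCast, smul_eq_mul]

lemma integral_Ij (hn : 1 ≤ n) (F : ℝ → ℂ) :
    ∫ t in Ij n j, F t = (n : ℝ)⁻¹ • ∫ s, F ((n : ℝ)⁻¹ * (s + j)) ∂μ01 := by
  have h1 : ∫ s, F ((n : ℝ)⁻¹ * (s + j)) ∂μ01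
      = ∫ t, F t ∂(Measure.map (eqv n j hn) μ01) := by
    rw [MeasureTheory.integral_map_equiv (eqv n j hn) F]
    simp only [eqv_apply]
  rw [h1, map_eqv hn, integral_smul_measure, smul_smul]
  simp [inv_mul_cancel₀ (ncast_pos hn).ne']

lemma ae_Ij (hn : 1 ≤ n) {p : ℝ → Prop}
    (h : ∀ᵐ s ∂μ01, p ((n : ℝ)⁻¹ * (s + j))) :
    ∀ᵐ t ∂(volume.restrict (Ij n j)), p t := by
  have h2 : ∀ᵐ t ∂(Measure.map (eqv n j hn) μ01), p t := by
    rw [← MeasurableEquiv.map_ae, Filter.eventually_map]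
    exact h
  rw [map_eqv hn] at h2
  exact (Measure.ae_ennreal_smul_measure_iff (by exact_mod_cast (by omega : n ≠ 0))).mp h2

lemma Ij_subset (hn : 1 ≤ n) (hj : j < n) : Ij n j ⊆ Set.Ico (0 : ℝ) 1 := by
  have hn0 := ncast_pos hn
  rintro t ⟨h1, h2⟩
  refine ⟨le_trans (by positivity) h1, ?_⟩
  have hle : ((j : ℝ) + 1) / n ≤ 1 := by
    rw [div_le_one hn0]
    exact_mod_cast Nat.succ_le_of_lt hj
  linarith

lemma restrict_Ij (hn : 1 ≤ n) (hj : j < n) :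
    μ01.restrict (Ij n j) = volume.restrict (Ij n j) := by
  rw [Measure.restrict_restrict (by exact measurableSet_Ico),
    Set.inter_eq_self_of_subset_left (Ij_subset hn hj)]

/-- The candidate representative of `S* η`. -/
def adjRep (n j : ℕ) (η : L2I) : ℝ → ℂ :=
  fun s => ((Real.sqrt n : ℂ))⁻¹ * (η : ℝ → ℂ) ((n : ℝ)⁻¹ * (s + j))

lemma ac (hn : 1 ≤ n) (hj : j < n) :
    ((n : ℝ≥0∞) • volume.restrict (Ij n j)) ≪ μ01 := by
  refine Measure.AbsolutelyContinuous.mk fun s hs h0 => ?_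
  rw [Measure.restrict_apply hs] at h0
  rw [Measure.smul_apply, Measure.restrict_apply hs, smul_eq_mul]
  have : volume (s ∩ Ij n j) = 0 :=
    measure_mono_null (Set.inter_subset_inter_right s (Ij_subset hn hj)) h0
  simp [this]

lemma memLp_adjRep (hn : 1 ≤ n) (hj : j < n) (η : L2I) :
    MemLp (adjRep n j η) 2 μ01 := by
  have hη : MemLp (η : ℝ → ℂ) 2 ((n : ℝ≥0∞) • volume.restrict (Ij n j)) := by
    have h1 : MemLp (η : ℝ → ℂ) 2 (μ01.restrict (Ij n j)) := (Lp.memLp η).restrict _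
    rw [restrict_Ij hn hj] at h1
    exact h1.smul_measure (by simp)
  have hmeas : AEStronglyMeasurable (η : ℝ → ℂ) (Measure.map (eqv n j hn) μ01) := by
    rw [map_eqv hn]
    exact (Lp.aestronglyMeasurable η).mono_ac (ac hn hj)
  have hmap : MemLp ((η : ℝ → ℂ) ∘ (eqv n j hn)) 2 μ01 := by
    rw [← memLp_map_measure_iff hmeas (eqv n j hn).measurable.aemeasurable, map_eqv hn]
    exact hη
  exact hmap.const_mul _

/-- The candidate value of the adjoint. -/
def adjFun (hn : 1 ≤ n) (hj : j < n) (η : L2I) : L2I :=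
  (memLp_adjRep hn hj η).toLp _

lemma sqrt_ne_zero (hn : 1 ≤ n) : ((Real.sqrt n : ℂ)) ≠ 0 := by
  have : (0 : ℝ) < Real.sqrt n := Real.sqrt_pos.mpr (ncast_pos hn)
  exact_mod_cast this.ne'

lemma sqrt_mul_self (hn : 1 ≤ n) :
    ((Real.sqrt n : ℂ)) * ((Real.sqrt n : ℂ)) = ((n : ℝ) : ℂ) := by
  norm_cast
  exact Real.mul_self_sqrt (ncast_pos hn).le

lemma adjoint_eq (hn : 1 ≤ n) (hj : j < n) {S : L2I →L[ℂ] L2I} (hS : IsShiftOp n j S)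
    (η : L2I) : ContinuousLinearMap.adjoint S η = adjFun hn hj η := by
  apply ext_inner_left ℂ
  intro ξ
  rw [ContinuousLinearMap.adjoint_inner_right]
  rw [L2.inner_def, L2.inner_def]
  have hLHS : ∫ a, ⟪(S ξ : ℝ → ℂ) a, (η : ℝ → ℂ) a⟫ ∂μ01
      = ∫ a, (Ij n j).indicator
          (fun t => (starRingEnd ℂ) ((Real.sqrt n : ℂ) * (ξ : ℝ → ℂ) (n * t - j))
            * (η : ℝ → ℂ) t) a ∂μ01 := by
    refine integral_congr_ae ?_
    filter_upwards [hS ξ] with a ha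
    classical
    rw [RCLike.inner_apply, ha, Set.indicator_apply]
    by_cases hc : (j : ℝ) / n ≤ a ∧ a < ((j : ℝ) + 1) / n
    · rw [if_pos hc, if_pos (by exact hc : a ∈ Ij n j), mul_comm]
    · rw [if_neg hc, map_zero, mul_zero, if_neg (by exact hc : ¬ a ∈ Ij n j)]
  rw [hLHS, integral_indicator (by exact measurableSet_Ico), restrict_Ij hn hj,
    integral_Ij hn]
  have hsimp : ∀ s : ℝ,
      (starRingEnd ℂ) ((Real.sqrt n : ℂ)
          * (ξ : ℝ → ℂ) ((n : ℝ) * ((n : ℝ)⁻¹ * (s + j)) - j))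
        * (η : ℝ → ℂ) ((n : ℝ)⁻¹ * (s + j))
      = (Real.sqrt n : ℂ) * ((starRingEnd ℂ) ((ξ : ℝ → ℂ) s)
          * (η : ℝ → ℂ) ((n : ℝ)⁻¹ * (s + j))) := by
    intro s
    rw [eqv_arg hn, map_mul, Complex.conj_ofReal]
    ring
  have hRHS : ∫ a, ⟪(ξ : ℝ → ℂ) a, (adjFun hn hj η : ℝ → ℂ) a⟫ ∂μ01
      = ∫ a, ((Real.sqrt n : ℂ))⁻¹ * ((starRingEnd ℂ) ((ξ : ℝ → ℂ) a)
          * (η : ℝ → ℂ) ((n : ℝ)⁻¹ * (a + j))) ∂μ01 := by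
    refine integral_congr_ae ?_
    filter_upwards [(memLp_adjRep hn hj η).coeFn_toLp] with a ha
    rw [RCLike.inner_apply]
    simp only [adjFun] at ha ⊢
    rw [ha, adjRep]
    ring
  rw [hRHS]
  simp only [hsimp]
  rw [integral_const_mul, integral_const_mul]
  rw [Complex.real_smul, ← mul_assoc]
  congr 1
  have h1 := sqrt_mul_self hn
  have h2 := sqrt_ne_zero hn
  have h3 : ((n : ℝ) : ℂ) ≠ 0 := by exact_mod_cast (ncast_pos hn).ne'
  rw [Complex.ofReal_inv]
  field_simp
  rw [sq, h1]

lemma comp_apply_ae (hn : 1 ≤ n) (hj : j < n) {S : L2I →L[ℂ] L2I}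
    (hS : IsShiftOp n j S) (η : L2I) :
    (S (adjFun hn hj η) : ℝ → ℂ) =ᵐ[μ01]
      fun t => if (j : ℝ) / n ≤ t ∧ t < ((j : ℝ) + 1) / n then (η : ℝ → ℂ) t else 0 := by
  refine (hS (adjFun hn hj η)).trans ?_
  have hae : ∀ᵐ t ∂(volume.restrict (Ij n j)),
      (Real.sqrt n : ℂ) * (adjFun hn hj η : ℝ → ℂ) ((n : ℝ) * t - j) = (η : ℝ → ℂ) t := by
    apply ae_Ij hn
    filter_upwards [(memLp_adjRep hn hj η).coeFn_toLp] with s hs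
    rw [eqv_arg hn]
    simp only [adjFun]
    rw [hs, adjRep, mul_inv_cancel_left₀ (sqrt_ne_zero hn)]
  have h3 : ∀ᵐ t ∂μ01, t ∈ Ij n j →
      (Real.sqrt n : ℂ) * (adjFun hn hj η : ℝ → ℂ) ((n : ℝ) * t - j) = (η : ℝ → ℂ) t :=
    ae_restrict_of_ae (ae_imp_of_ae_restrict hae)
  filter_upwards [h3] with t ht
  by_cases hc : (j : ℝ) / n ≤ t ∧ t < ((j : ℝ) + 1) / n
  · rw [if_pos hc, if_pos hc]
    exact ht hc
  · rw [if_neg hc, if_neg hc]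

lemma sum_indicator (hn : 1 ≤ n) (f : ℝ → ℂ) :
    ∀ᵐ t ∂μ01, ∑ j ∈ Finset.range n,
      (if (j : ℝ) / n ≤ t ∧ t < ((j : ℝ) + 1) / n then f t else 0) = f t := by
  filter_upwards [ae_restrict_mem (by exact measurableSet_Ico)] with t ht
  obtain ⟨ht0, ht1⟩ := ht
  have hn0 := ncast_pos hn
  have htn : (0 : ℝ) ≤ t * n := by positivity
  have key : ∀ j : ℕ, ((j : ℝ) / n ≤ t ∧ t < ((j : ℝ) + 1) / n) ↔ j = ⌊t * n⌋₊ := by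
    intro j
    rw [div_le_iff₀ hn0, lt_div_iff₀ hn0]
    constructor
    · rintro ⟨h1, h2⟩
      exact ((Nat.floor_eq_iff htn).mpr ⟨h1, h2⟩).symm
    · rintro rfl
      exact ⟨Nat.floor_le htn, Nat.lt_floor_add_one _⟩
  simp only [key]
  rw [Finset.sum_ite_eq' (Finset.range n) (⌊t * n⌋₊) (fun _ => f t)]
  rw [if_pos]
  rw [Finset.mem_range, Nat.floor_lt htn]
  calc t * n < 1 * n := by exact mul_lt_mul_of_pos_right ht1 hn0
  _ = n := one_mul _

lemma coeFn_sum_ae {ι : Type*} (s : Finset ι) (v : ι → L2I) :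
    ((∑ j ∈ s, v j : L2I) : ℝ → ℂ) =ᵐ[μ01] fun t => ∑ j ∈ s, (v j : ℝ → ℂ) t := by
  classical
  induction s using Finset.cons_induction with
  | empty => simp only [Finset.sum_empty]; exact Lp.coeFn_zero ℂ 2 μ01
  | cons a s ha ih =>
    rw [Finset.sum_cons]
    refine (Lp.coeFn_add _ _).trans ?_
    filter_upwards [ih] with t ht
    simp only [Pi.add_apply, ht, Finset.sum_cons]

end Stmt2Aux

/-- For every integer `n ≥ 1`, the operators `S_{n,0}, …, S_{n,n−1}` on
`L²([0,1))` satisfy `Σ_{j=0}^{n−1} S_{n,j} ∘ S_{n,j}* = id`. -/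
theorem stmt2 (n : ℕ) (hn : 1 ≤ n) (S : ℕ → (L2I →L[ℂ] L2I))
    (hS : ∀ j < n, IsShiftOp n j (S j)) :
    ∑ j ∈ Finset.range n, (S j).comp (ContinuousLinearMap.adjoint (S j)) =
      ContinuousLinearMap.id ℂ L2I := by
  refine ContinuousLinearMap.ext fun η => ?_
  rw [ContinuousLinearMap.sum_apply, ContinuousLinearMap.id_apply]
  simp only [ContinuousLinearMap.comp_apply]
  apply Lp.ext
  refine (Stmt2Aux.coeFn_sum_ae (Finset.range n)
    (fun j => (S j) (ContinuousLinearMap.adjoint (S j) η))).trans ?_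
  have hterm : ∀ j ∈ Finset.range n,
      ((S j) (ContinuousLinearMap.adjoint (S j) η) : ℝ → ℂ) =ᵐ[μ01]
        fun t => if (j : ℝ) / n ≤ t ∧ t < ((j : ℝ) + 1) / n then (η : ℝ → ℂ) t else 0 := by
    intro j hj
    have hj' := Finset.mem_range.mp hj
    rw [Stmt2Aux.adjoint_eq hn hj' (hS j hj') η]
    exact Stmt2Aux.comp_apply_ae hn hj' (hS j hj') η
  have hall : ∀ᵐ t ∂μ01, ∀ j ∈ Finset.range n,
      ((S j) (ContinuousLinearMap.adjoint (S j) η) : ℝ → ℂ) t =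
        (if (j : ℝ) / n ≤ t ∧ t < ((j : ℝ) + 1) / n then (η : ℝ → ℂ) t else 0) := by
    rw [Filter.eventually_all_finset]
    exact hterm
  filter_upwards [hall, Stmt2Aux.sum_indicator hn (η : ℝ → ℂ)] with t h1 h2
  rw [Finset.sum_congr rfl h1]
  exact h2

end
end

section
/- Let P be a commutative monoid, let E be a product system of finite-dimensional Hilbert spaces over P, and let φ be a Cuntz representation of E in a C*-algebra B. Let s, t ∈ P, let B_s and B_t be orthonormal bases of E_s and E_t respectively, and let x' ∈ E_s and y' ∈ E_t. Then φ(y')*·φ(x') = Σ_{x∈B_s} Σ_{y∈B_t} (x'y | y'x) · φ(x)·φ(y)*. -/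
noncomputable section

open scoped InnerProductSpace

/-- A product system of finite-dimensional Hilbert spaces over a monoid `P`:
a family `(E s)_{s ∈ P}` of nonzero finite-dimensional complex Hilbert spaces with an
associative bilinear multiplication `E s × E t → E (s*t)` satisfying
`(xy | x'y') = (x|x')·(y|y')`, whose products span `E (s*t)`, together with a unit
vector `1 ∈ E 1` (where `dim (E 1) = 1`) acting as a two-sided identity. -/
structure ProductSystem (P : Type) [Monoid P] where
  /-- the fiber Hilbert spaces -/
  E : P → Type
  [normed : ∀ s, NormedAddCommGroup (E s)]
  [ips : ∀ s, InnerProductSpace ℂ (E s)]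
  [fd : ∀ s, FiniteDimensional ℂ (E s)]
  nontriv : ∀ s, Nontrivial (E s)
  /-- the multiplication, as a bilinear map -/
  mulMap : ∀ s t : P, E s →ₗ[ℂ] E t →ₗ[ℂ] E (s * t)
  assoc : ∀ {r s t : P} (x : E r) (y : E s) (z : E t),
    HEq (mulMap (r * s) t (mulMap r s x y) z) (mulMap r (s * t) x (mulMap s t y z))
  inner_mul : ∀ {s t : P} (x x' : E s) (y y' : E t),
    (inner ℂ (mulMap s t x y) (mulMap s t x' y') : ℂ) = (inner ℂ x x' : ℂ) * (inner ℂ y y' : ℂ)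
  span_mul : ∀ s t : P,
    Submodule.span ℂ {z : E (s * t) | ∃ (x : E s) (y : E t), z = mulMap s t x y} = ⊤
  finrank_one : Module.finrank ℂ (E 1) = 1
  /-- the identity vector -/
  one : E 1
  norm_one : ‖one‖ = 1
  one_mul : ∀ {s : P} (x : E s), HEq (mulMap 1 s one x) x
  mul_one : ∀ {s : P} (x : E s), HEq (mulMap s 1 x one) x

attribute [instance] ProductSystem.normed ProductSystem.ips ProductSystem.fd

namespace ProductSystem

variable {P : Type} [Monoid P]

/-- The multiplication of a product system. -/
def mul (𝒠 : ProductSystem P) {s t : P} (x : 𝒠.E s) (y : 𝒠.E t) : 𝒠.E (s * t) :=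
  𝒠.mulMap s t x y

/-- Transport along an equality of indices. -/
def fcast (𝒠 : ProductSystem P) {s t : P} (h : s = t) (x : 𝒠.E s) : 𝒠.E t :=
  _root_.cast (congrArg 𝒠.E h) x

end ProductSystem

/-- A Cuntz representation of a product system `𝒠` in a (possibly non-unital)
C*-algebra `B`: a family of linear maps `φ s : E s → B` such that
`φ (xy) = φ x · φ y`, `φ(y)* φ(x) = (x|y) φ(1)`, and for every `s` and every
orthonormal basis `(f_i)` of `E s` one has `Σ_i φ(f_i) φ(f_i)* = φ(1)`. -/
structure IsCuntzRep {P : Type} [Monoid P] (𝒠 : ProductSystem P)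
    {B : Type} [NonUnitalCStarAlgebra B] (φ : ∀ s : P, 𝒠.E s →ₗ[ℂ] B) : Prop where
  map_mul : ∀ {s t : P} (x : 𝒠.E s) (y : 𝒠.E t), φ (s * t) (𝒠.mul x y) = φ s x * φ t y
  star_mul_self : ∀ {s : P} (x y : 𝒠.E s),
    star (φ s y) * φ s x = (inner ℂ y x : ℂ) • φ 1 𝒠.one
  cuntz : ∀ (s : P) (n : ℕ) (b : OrthonormalBasis (Fin n) ℂ (𝒠.E s)),
    ∑ i, φ s (b i) * star (φ s (b i)) = φ 1 𝒠.one

section Aux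

variable {P : Type} [Monoid P] (𝒠 : ProductSystem P) {B : Type} [NonUnitalCStarAlgebra B]
  (φ : ∀ s : P, 𝒠.E s →ₗ[ℂ] B)

lemma phi_congr {a b : P} (h : a = b) {v : 𝒠.E a} {w : 𝒠.E b} (hvw : HEq v w) :
    φ a v = φ b w := by subst h; exact congrArg _ (eq_of_heq hvw)

lemma phi_fcast {a b : P} (h : a = b) (v : 𝒠.E a) :
    φ b (𝒠.fcast h v) = φ a v := by subst h; rfl

/-- An orthonormal basis of `E 1` consisting of the unit vector. -/
def oneBasis : OrthonormalBasis (Fin 1) ℂ (𝒠.E 1) :=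
  OrthonormalBasis.mk (v := fun _ => 𝒠.one)
    ⟨fun _ => 𝒠.norm_one, fun i j h => absurd (Subsingleton.elim i j) h⟩
    (by
      have h0 : 𝒠.one ≠ 0 := by
        intro h; have := 𝒠.norm_one; rw [h, norm_zero] at this; norm_num at this
      have : Submodule.span ℂ (Set.range fun _ : Fin 1 => 𝒠.one) = ⊤ := by
        apply Submodule.eq_top_of_finrank_eq
        rw [Set.range_const]
        rw [finrank_span_singleton h0, 𝒠.finrank_one]
      exact this.ge)

lemma phi_one_proj (hφ : IsCuntzRep 𝒠 φ) : φ 1 𝒠.one * star (φ 1 𝒠.one) = φ 1 𝒠.one := by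
  have h := hφ.cuntz 1 1 (oneBasis 𝒠)
  have e : (oneBasis 𝒠) 0 = 𝒠.one := by
    unfold oneBasis; exact congrFun (OrthonormalBasis.coe_mk _ _) 0
  simpa [e] using h

lemma star_phi_one (hφ : IsCuntzRep 𝒠 φ) : star (φ 1 𝒠.one) = φ 1 𝒠.one := by
  conv_lhs => rw [← phi_one_proj 𝒠 φ hφ, star_mul, star_star]
  exact phi_one_proj 𝒠 φ hφ

lemma phi_mul_one (hφ : IsCuntzRep 𝒠 φ) {s : P} (x : 𝒠.E s) : φ s x * φ 1 𝒠.one = φ s x := by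
  rw [← hφ.map_mul x 𝒠.one]
  exact phi_congr 𝒠 φ (mul_one s) (𝒠.mul_one x)

lemma phi_one_mul_star (hφ : IsCuntzRep 𝒠 φ) {t : P} (y : 𝒠.E t) :
    φ 1 𝒠.one * star (φ t y) = star (φ t y) := by
  rw [← star_phi_one 𝒠 φ hφ, ← star_mul, phi_mul_one 𝒠 φ hφ]

end Aux

/-- Let `P` be a commutative monoid, `𝒠` a product system of
finite-dimensional Hilbert spaces over `P`, and `φ` a Cuntz representation of `𝒠` in a
C*-algebra `B`.  Let `s, t ∈ P`, let `(bs i)` and `(bt j)` be orthonormal bases of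
`E s` and `E t`, and let `x' ∈ E s`, `y' ∈ E t`.  Then
`φ(y')* φ(x') = Σ_i Σ_j (x'·bt j | y'·bs i) · φ(bs i) φ(bt j)*`
(the paper's inner product `(u | v)` is linear in `u`, i.e. it is `⟪v, u⟫` in Mathlib's
convention; `y'·bs i ∈ E (t*s)` is transported to `E (s*t)` using commutativity). -/
theorem stmt6 {P : Type} [CommMonoid P] (𝒠 : ProductSystem P)
    {B : Type} [NonUnitalCStarAlgebra B]
    (φ : ∀ s : P, 𝒠.E s →ₗ[ℂ] B) (hφ : IsCuntzRep 𝒠 φ)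
    (s t : P) (ns nt : ℕ)
    (bs : OrthonormalBasis (Fin ns) ℂ (𝒠.E s)) (bt : OrthonormalBasis (Fin nt) ℂ (𝒠.E t))
    (x' : 𝒠.E s) (y' : 𝒠.E t) :
    star (φ t y') * φ s x' =
      ∑ i, ∑ j,
        (inner ℂ (𝒠.fcast (mul_comm t s) (𝒠.mul y' (bs i))) (𝒠.mul x' (bt j)) : ℂ) •
          (φ s (bs i) * star (φ t (bt j))) := by
  have key : star (φ t y') * φ s x'
      = (φ 1 𝒠.one * star (φ t y')) * (φ s x' * φ 1 𝒠.one) := by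
    rw [phi_one_mul_star 𝒠 φ hφ, phi_mul_one 𝒠 φ hφ]
  rw [key,
    show φ 1 𝒠.one * star (φ t y')
        = ∑ i, φ s (bs i) * star (φ s (bs i)) * star (φ t y') by
      rw [← Finset.sum_mul, hφ.cuntz s ns bs],
    show φ s x' * φ 1 𝒠.one
        = ∑ j, φ s x' * (φ t (bt j) * star (φ t (bt j))) by
      rw [← Finset.mul_sum, hφ.cuntz t nt bt],
    Finset.sum_mul]
  refine Finset.sum_congr rfl fun i _ => ?_
  rw [Finset.mul_sum]
  refine Finset.sum_congr rfl fun j _ => ?_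
  set u : 𝒠.E (s * t) := 𝒠.fcast (mul_comm t s) (𝒠.mul y' (bs i)) with hu
  set v : 𝒠.E (s * t) := 𝒠.mul x' (bt j) with hv
  have h1 : star (φ s (bs i)) * star (φ t y') = star (φ (s * t) u) := by
    rw [hu, phi_fcast, ← star_mul, ← hφ.map_mul]
  have h2 : φ s x' * φ t (bt j) = φ (s * t) v := (hφ.map_mul x' (bt j)).symm
  have h3 : star (φ (s * t) u) * φ (s * t) v = (inner ℂ u v : ℂ) • φ 1 𝒠.one :=
    hφ.star_mul_self v u
  calc φ s (bs i) * star (φ s (bs i)) * star (φ t y')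
        * (φ s x' * (φ t (bt j) * star (φ t (bt j))))
      = φ s (bs i) * ((star (φ s (bs i)) * star (φ t y'))
          * (φ s x' * φ t (bt j))) * star (φ t (bt j)) := by
        simp only [mul_assoc]
    _ = φ s (bs i) * ((inner ℂ u v : ℂ) • φ 1 𝒠.one) * star (φ t (bt j)) := by
        rw [h1, h2, h3]
    _ = (inner ℂ u v : ℂ) • (φ s (bs i) * φ 1 𝒠.one * star (φ t (bt j))) := by
        simp only [mul_smul_comm, smul_mul_assoc]
    _ = (inner ℂ u v : ℂ) • (φ s (bs i) * star (φ t (bt j))) := by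
        rw [phi_mul_one 𝒠 φ hφ]

end
end

section
/- Let B be a unital C*-algebra, let m, n ≥ 1 be integers, and let V_{1,0}, …, V_{1,m−1} and V_{2,0}, …, V_{2,mn−1} be isometries in B satisfying V_{1,i}*V_{1,i'} = 0 for i ≠ i', V_{2,k}*V_{2,k'} = 0 for k ≠ k', Σ_{i=0}^{m−1} V_{1,i}V_{1,i}* = 1, Σ_{k=0}^{mn−1} V_{2,k}V_{2,k}* = 1, and V_{1,i}V_{2,k} = V_{2,k'}V_{1,i'} whenever i·mn + k = k'·m + i' (with 0 ≤ i, i' ≤ m−1 and 0 ≤ k, k' ≤ mn−1). For 0 ≤ j ≤ n−1 define U_{2,j} := Σ_{l=0}^{m−1} V_{2,jm+l}·V_{1,l}*. Then each U_{2,j} is an isometry and Σ_{j=0}^{n−1} U_{2,j}U_{2,j}* = 1. -/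
/-- The index bound `j*m + l < m*n` used to form `U_{2,j} = Σ_l V_{2,jm+l} V_{1,l}*`. -/
theorem lex_index_lt {m n j l : ℕ} (hj : j < n) (hl : l < m) : j * m + l < m * n := by
  calc j * m + l < (j + 1) * m := by nlinarith
    _ ≤ n * m := Nat.mul_le_mul_right m hj
    _ = m * n := Nat.mul_comm n m

/-- Let `B` be a unital C*-algebra, `m, n ≥ 1`, and let
`V_{1,0}, …, V_{1,m−1}` and `V_{2,0}, …, V_{2,mn−1}` be isometries in `B` with
pairwise orthogonal ranges, each family having range projections summing to `1`,
and satisfying `V_{1,i} V_{2,k} = V_{2,k'} V_{1,i'}` whenever `i·mn + k = k'·m + i'`.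
For `0 ≤ j ≤ n−1` define `U_{2,j} := Σ_{l=0}^{m−1} V_{2,jm+l} · V_{1,l}*`.
Then each `U_{2,j}` is an isometry and `Σ_{j=0}^{n−1} U_{2,j} U_{2,j}* = 1`. -/
theorem stmt11 {B : Type*} [CStarAlgebra B] (m n : ℕ) (hm : 1 ≤ m) (hn : 1 ≤ n)
    (V₁ : Fin m → B) (V₂ : Fin (m * n) → B)
    (hV₁iso : ∀ i, star (V₁ i) * V₁ i = 1)
    (hV₂iso : ∀ k, star (V₂ k) * V₂ k = 1)
    (hV₁orth : ∀ i i', i ≠ i' → star (V₁ i) * V₁ i' = 0)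
    (hV₂orth : ∀ k k', k ≠ k' → star (V₂ k) * V₂ k' = 0)
    (hV₁sum : ∑ i : Fin m, V₁ i * star (V₁ i) = 1)
    (hV₂sum : ∑ k : Fin (m * n), V₂ k * star (V₂ k) = 1)
    (hcomm : ∀ (i : Fin m) (k : Fin (m * n)) (k' : Fin (m * n)) (i' : Fin m),
      i.val * (m * n) + k.val = k'.val * m + i'.val → V₁ i * V₂ k = V₂ k' * V₁ i')
    (U₂ : Fin n → B)
    (hU₂ : ∀ j : Fin n, U₂ j =
      ∑ l : Fin m, V₂ ⟨j.val * m + l.val, lex_index_lt j.isLt l.isLt⟩ * star (V₁ l)) :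
    (∀ j : Fin n, star (U₂ j) * U₂ j = 1) ∧
      ∑ j : Fin n, U₂ j * star (U₂ j) = 1 := by

  have key2 : ∀ (j : Fin n) (l l' : Fin m),
      star (V₂ ⟨j.val * m + l.val, lex_index_lt j.isLt l.isLt⟩) *
        V₂ ⟨j.val * m + l'.val, lex_index_lt j.isLt l'.isLt⟩ = if l = l' then 1 else 0 := by
    intro j l l'
    by_cases h : l = l'
    · subst h; simp [hV₂iso]
    · rw [if_neg h]
      apply hV₂orth
      intro hh
      apply h
      have := congrArg Fin.val hh
      simp only [Fin.val_mk] at this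
      exact Fin.ext (by omega)
  have key1 : ∀ l l' : Fin m, star (V₁ l) * V₁ l' = if l = l' then 1 else 0 := by
    intro l l'
    by_cases h : l = l'
    · subst h; simp [hV₁iso]
    · rw [if_neg h]; exact hV₁orth _ _ h
  constructor
  · intro j
    calc star (U₂ j) * U₂ j
        = ∑ l : Fin m, ∑ l' : Fin m, V₁ l *
            (star (V₂ ⟨j.val * m + l.val, lex_index_lt j.isLt l.isLt⟩) *
              V₂ ⟨j.val * m + l'.val, lex_index_lt j.isLt l'.isLt⟩) * star (V₁ l') := by
          rw [hU₂ j, star_sum, Finset.sum_mul]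
          refine Finset.sum_congr rfl fun l _ => ?_
          rw [Finset.mul_sum]
          refine Finset.sum_congr rfl fun l' _ => ?_
          simp only [star_mul, star_star, mul_assoc]
      _ = ∑ l : Fin m, V₁ l * star (V₁ l) := by
          refine Finset.sum_congr rfl fun l _ => ?_
          simp only [key2]
          rw [Finset.sum_eq_single l]
          · simp
          · intro l' _ h; simp [Ne.symm h]
          · simp
      _ = 1 := hV₁sum
  · have hterm : ∀ j : Fin n, U₂ j * star (U₂ j) =
        ∑ l : Fin m, V₂ ⟨j.val * m + l.val, lex_index_lt j.isLt l.isLt⟩ *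
          star (V₂ ⟨j.val * m + l.val, lex_index_lt j.isLt l.isLt⟩) := by
      intro j
      calc U₂ j * star (U₂ j)
          = ∑ l : Fin m, ∑ l' : Fin m,
              V₂ ⟨j.val * m + l.val, lex_index_lt j.isLt l.isLt⟩ *
                (star (V₁ l) * V₁ l') *
                star (V₂ ⟨j.val * m + l'.val, lex_index_lt j.isLt l'.isLt⟩) := by
            rw [hU₂ j, star_sum, Finset.sum_mul]
            refine Finset.sum_congr rfl fun l _ => ?_
            rw [Finset.mul_sum]
            refine Finset.sum_congr rfl fun l' _ => ?_
            simp only [star_mul, star_star, mul_assoc]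
        _ = _ := by
            refine Finset.sum_congr rfl fun l _ => ?_
            simp only [key1]
            rw [Finset.sum_eq_single l]
            · simp
            · intro l' _ h; simp [Ne.symm h]
            · simp
    simp only [hterm]
    rw [← hV₂sum, ← Fintype.sum_prod_type']
    apply Fintype.sum_bijective
      (fun p : Fin n × Fin m => (⟨p.1.val * m + p.2.val,
        lex_index_lt p.1.isLt p.2.isLt⟩ : Fin (m * n)))
    · rw [Fintype.bijective_iff_injective_and_card]
      constructor
      · rintro ⟨j, l⟩ ⟨j', l'⟩ h
        have h' := congrArg Fin.val h
        simp only [Fin.val_mk] at h'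
        have hl := l.isLt; have hl' := l'.isLt
        have e1 : (j.val * m + l.val) / m = j.val := by
          rw [mul_comm, Nat.mul_add_div (by omega)]
          simp [Nat.div_eq_of_lt hl]
        have e2 : (j'.val * m + l'.val) / m = j'.val := by
          rw [mul_comm, Nat.mul_add_div (by omega)]
          simp [Nat.div_eq_of_lt hl']
        have hj : j.val = j'.val := by rw [← e1, ← e2, h']
        rw [hj] at h'
        exact Prod.ext (Fin.ext hj) (Fin.ext (show l.val = l'.val by omega))
      · simp [Nat.mul_comm]
    · intro p; rfl
end

section
/- Let B be a unital C*-algebra, let m, n ≥ 1 be integers, and let V_{1,0}, …, V_{1,m−1} and V_{2,0}, …, V_{2,mn−1} be isometries in B satisfying V_{1,i}*V_{1,i'} = 0 for i ≠ i', V_{2,k}*V_{2,k'} = 0 for k ≠ k', Σ_{i=0}^{m−1} V_{1,i}V_{1,i}* = 1, Σ_{k=0}^{mn−1} V_{2,k}V_{2,k}* = 1, and V_{1,i}V_{2,k} = V_{2,k'}V_{1,i'} whenever i·mn + k = k'·m + i'. Set U_{1,i} := V_{1,i} for 0 ≤ i ≤ m−1 and U_{2,j} := Σ_{l=0}^{m−1}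 V_{2,jm+l}·V_{1,l}* for 0 ≤ j ≤ n−1. Then U_{1,i}·U_{2,j} = U_{2,p}·U_{1,q} whenever i·n + j = p·m + q with 0 ≤ i, q ≤ m−1 and 0 ≤ j, p ≤ n−1. -/
/-- Let `B` be a unital C*-algebra, `m, n ≥ 1`, and let
`V_{1,0}, …, V_{1,m−1}` and `V_{2,0}, …, V_{2,mn−1}` be isometries in `B` with
pairwise orthogonal ranges, each family having range projections summing to `1`,
and satisfying `V_{1,i} V_{2,k} = V_{2,k'} V_{1,i'}` whenever `i·mn + k = k'·m + i'`.
Set `U_{1,i} := V_{1,i}` and `U_{2,j} := Σ_{l=0}^{m−1} V_{2,jm+l} · V_{1,l}*`.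
Then `U_{1,i} · U_{2,j} = U_{2,p} · U_{1,q}` whenever `i·n + j = p·m + q`. -/
theorem stmt12 {B : Type*} [CStarAlgebra B] (m n : ℕ) (hm : 1 ≤ m) (hn : 1 ≤ n)
    (V₁ : Fin m → B) (V₂ : Fin (m * n) → B)
    (hV₁iso : ∀ i, star (V₁ i) * V₁ i = 1)
    (hV₂iso : ∀ k, star (V₂ k) * V₂ k = 1)
    (hV₁orth : ∀ i i', i ≠ i' → star (V₁ i) * V₁ i' = 0)
    (hV₂orth : ∀ k k', k ≠ k' → star (V₂ k) * V₂ k' = 0)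
    (hV₁sum : ∑ i : Fin m, V₁ i * star (V₁ i) = 1)
    (hV₂sum : ∑ k : Fin (m * n), V₂ k * star (V₂ k) = 1)
    (hcomm : ∀ (i : Fin m) (k : Fin (m * n)) (k' : Fin (m * n)) (i' : Fin m),
      i.val * (m * n) + k.val = k'.val * m + i'.val → V₁ i * V₂ k = V₂ k' * V₁ i')
    (U₁ : Fin m → B) (hU₁ : ∀ i, U₁ i = V₁ i)
    (U₂ : Fin n → B)
    (hU₂ : ∀ j : Fin n, U₂ j =
      ∑ l : Fin m, V₂ ⟨j.val * m + l.val, lex_index_lt j.isLt l.isLt⟩ * star (V₁ l)) :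
    ∀ (i : Fin m) (j : Fin n) (p : Fin n) (q : Fin m),
      i.val * n + j.val = p.val * m + q.val → U₁ i * U₂ j = U₂ p * U₁ q := by
  intro i j p q h
  have hk : i.val * n + j.val < m * n := by nlinarith [i.isLt, j.isLt]
  set K : Fin (m * n) := ⟨i.val * n + j.val, hk⟩ with hK
  rw [hU₁ i, hU₁ q, hU₂ j, hU₂ p, Finset.mul_sum, Finset.sum_mul]
  have hL : ∀ l : Fin m,
      V₁ i * (V₂ ⟨j.val * m + l.val, lex_index_lt j.isLt l.isLt⟩ * star (V₁ l))
        = V₂ K * (V₁ l * star (V₁ l)) := by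
    intro l
    rw [← mul_assoc, hcomm i _ K l (by simp only [hK]; ring), mul_assoc]
  have hLHS : (∑ l : Fin m,
      V₁ i * (V₂ ⟨j.val * m + l.val, lex_index_lt j.isLt l.isLt⟩ * star (V₁ l))) = V₂ K := by
    simp only [hL, ← Finset.mul_sum, hV₁sum, mul_one]
  have hRHS : (∑ l : Fin m,
      V₂ ⟨p.val * m + l.val, lex_index_lt p.isLt l.isLt⟩ * star (V₁ l) * V₁ q) = V₂ K := by
    rw [Finset.sum_eq_single q]
    · rw [mul_assoc, hV₁iso, mul_one]
      congr 1
      exact Fin.ext (by simp [hK, ← h])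
    · intro l _ hlq
      rw [mul_assoc, hV₁orth l q hlq, mul_zero]
    · intro hq; exact absurd (Finset.mem_univ q) hq
  rw [hLHS, hRHS]
end

section
/- Let m, n ≥ 2 be natural numbers such that m^q = n^p for some positive integers p and q. Then there exists a unique positive integer l such that m = l^a and n = l^b for some relatively prime positive integers a and b. -/
lemma aux_exists (m n : ℕ) (hm : 2 ≤ m) (hn : 2 ≤ n) (p q : ℕ)
    (hp : 0 < p) (hq : 0 < q) (hpq : Nat.Coprime q p) (h : m ^ q = n ^ p) :
    ∃ l : ℕ, 0 < l ∧ m = l ^ p ∧ n = l ^ q := by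
  have hQ : ((m : ℚ)) ^ q = (n : ℚ) ^ p := by exact_mod_cast congrArg (Nat.cast : ℕ → ℚ) h
  obtain ⟨c, hc1, hc2⟩ := (pow_eq_pow_iff_of_coprime hpq).mp hQ
  have hden : c.den = 1 := by
    by_contra hne
    have h2 : 2 ≤ c.den := by
      have := c.den_pos
      omega
    have h3 : 2 ≤ c.den ^ p := le_trans h2 (Nat.le_self_pow hp.ne' _)
    have h4 : ((m : ℚ)).den = c.den ^ p := by rw [hc1, Rat.den_pow]
    rw [Rat.den_natCast] at h4
    omega
  have hcn : (c.num : ℚ) = c := (Rat.den_eq_one_iff c).mp hden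
  rw [← hcn] at hc1 hc2
  have hm' : (m : ℤ) = c.num ^ p := by exact_mod_cast hc1
  have hn' : (n : ℤ) = c.num ^ q := by exact_mod_cast hc2
  refine ⟨c.num.natAbs, ?_, ?_, ?_⟩
  · rcases Nat.eq_zero_or_pos c.num.natAbs with h0 | h0
    · exfalso
      rw [Int.natAbs_eq_zero] at h0
      rw [h0, zero_pow hp.ne'] at hm'
      omega
    · exact h0
  · have := congrArg Int.natAbs hm'
    simpa [Int.natAbs_pow] using this
  · have := congrArg Int.natAbs hn'
    simpa [Int.natAbs_pow] using this

/-- If `m, n ≥ 2` satisfy `m ^ q = n ^ p` for some positive integers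
`p` and `q` (equivalently, `log_m n` is rational), then there is a unique positive
integer `l` such that `m = l ^ a` and `n = l ^ b` for some relatively prime positive
integers `a` and `b`. -/
theorem stmt13 (m n : ℕ) (hm : 2 ≤ m) (hn : 2 ≤ n)
    (h : ∃ p q : ℕ, 0 < p ∧ 0 < q ∧ m ^ q = n ^ p) :
    ∃! l : ℕ, 0 < l ∧
      ∃ a b : ℕ, 0 < a ∧ 0 < b ∧ Nat.gcd a b = 1 ∧ m = l ^ a ∧ n = l ^ b := by
  obtain ⟨p, q, hp, hq, hpq⟩ := h
  set g := Nat.gcd p q with hg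
  have hg0 : 0 < g := Nat.gcd_pos_of_pos_left q hp
  have hp' : 0 < p / g := Nat.div_pos (Nat.le_of_dvd hp (Nat.gcd_dvd_left p q)) hg0
  have hq' : 0 < q / g := Nat.div_pos (Nat.le_of_dvd hq (Nat.gcd_dvd_right p q)) hg0
  have hcop : Nat.Coprime (p / g) (q / g) := Nat.coprime_div_gcd_div_gcd hg0
  have key : m ^ (q / g) = n ^ (p / g) := by
    have h1 : (m ^ (q / g)) ^ g = (n ^ (p / g)) ^ g := by
      rw [← pow_mul, ← pow_mul, Nat.div_mul_cancel (Nat.gcd_dvd_right p q),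
        Nat.div_mul_cancel (Nat.gcd_dvd_left p q), hpq]
    exact Nat.pow_left_injective hg0.ne' h1
  obtain ⟨l, hl0, hml, hnl⟩ := aux_exists m n hm hn (p / g) (q / g) hp' hq'
    hcop.symm key
  refine ⟨l, ⟨hl0, p / g, q / g, hp', hq', hcop, hml, hnl⟩, ?_⟩
  rintro l' ⟨hl'0, a, b, ha, hb, hab, rfl, hnl'⟩
  -- now m = l'^a = l^(p/g), n = l'^b = l^(q/g)
  have hl2 : 2 ≤ l := by
    by_contra hlt
    interval_cases l <;> simp_all <;> omega
  have hl'2 : 2 ≤ l' := by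
    by_contra hlt
    interval_cases l' <;> simp_all <;> omega
  set a' := p / g
  set b' := q / g
  -- l'^a = l^a', l'^b = l^b'
  have e1 : l' ^ a = l ^ a' := hml
  have e2 : l' ^ b = l ^ b' := hnl'.symm.trans hnl
  have e3 : l' ^ (a * b') = l' ^ (b * a') := by
    rw [pow_mul, pow_mul, e1, e2, ← pow_mul, ← pow_mul, Nat.mul_comm]
  have e4 : a * b' = b * a' := Nat.pow_right_injective hl'2 e3
  have hdvd1 : a ∣ a' := (Nat.Coprime.dvd_of_dvd_mul_left
    (Nat.coprime_iff_gcd_eq_one.mpr hab) ⟨b', e4.symm⟩)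
  have hdvd2 : a' ∣ a := (Nat.Coprime.dvd_of_dvd_mul_left
    (Nat.coprime_iff_gcd_eq_one.mpr hcop) ⟨b, by rw [mul_comm b' a, e4, mul_comm]⟩)
  have haa : a = a' := Nat.dvd_antisymm hdvd1 hdvd2
  have : l' ^ a = l ^ a := haa ▸ e1
  have hll : l' = l := Nat.pow_left_injective ha.ne' this
  exact hll
end

section
/- Let k ≥ 1, let d_1, …, d_k be positive integers, and for s ∈ ℕ^k write d(s) := Π_{a=1}^k d_a^{s_a}. Let B be a unital C*-algebra containing isometries U_{a,i} (1 ≤ a ≤ k, 0 ≤ i ≤ d_a − 1) which satisfy U_{a,i}*U_{a,j} = 0 whenever i ≠ j, and U_{a,i}U_{b,j} = U_{b,p}U_{a,q} whenever i·d_b + j = p·d_a + q (with 0 ≤ i, q ≤ d_a − 1 and 0 ≤ j, p ≤ d_b − 1). Then there is a unique family of elements Φ(s,m) ∈ B, indexed by s ∈ ℕ^k and 0 ≤ m ≤ d(s) − 1, such that Φ(0,0) = 1, Φ(e_a, i) = U_{a,i} for each standard basis vector e_a of ℕ^k and 0 ≤ i ≤ d_a − 1, and Φ(s,m)·Φ(t,n)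 = Φ(s+t, m·d(t) + n) for all s, t ∈ ℕ^k, 0 ≤ m ≤ d(s) − 1, 0 ≤ n ≤ d(t) − 1. Moreover each Φ(s,m) is an isometry, Φ(s,m)*Φ(s,m') = 0 for m ≠ m', and if in addition Σ_{i=0}^{d_a − 1} U_{a,i}U_{a,i}* = 1 for every a, then Σ_{m=0}^{d(s) − 1} Φ(s,m)Φ(s,m)* = 1 for every s ∈ ℕ^k. -/
noncomputable section

/-- The dimension function `s ↦ Π_a d_a ^ s_a` on `ℕ^k`. -/
def Dim {k : ℕ} (d : Fin k → ℕ) (s : Fin k → ℕ) : ℕ := ∏ a, d a ^ s a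

theorem Dim_zero {k : ℕ} (d : Fin k → ℕ) : Dim d 0 = 1 := by simp [Dim]

theorem Dim_single {k : ℕ} (d : Fin k → ℕ) (a : Fin k) : Dim d (Pi.single a 1) = d a := by
  classical
  unfold Dim
  rw [Finset.prod_eq_single a (fun b _ hb => by simp [Pi.single_eq_of_ne hb])
    (by simp)]
  simp

theorem Dim_add {k : ℕ} (d : Fin k → ℕ) (s t : Fin k → ℕ) :
    Dim d (s + t) = Dim d s * Dim d t := by
  simp [Dim, pow_add, Finset.prod_mul_distrib]

theorem mul_add_lt_of_lt {m M n N : ℕ} (hm : m < M) (hn : n < N) : m * N + n < M * N := by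
  calc m * N + n < (m + 1) * N := by nlinarith
    _ ≤ M * N := Nat.mul_le_mul_right N hm

theorem Dim_index_lt {k : ℕ} (d : Fin k → ℕ) (s t : Fin k → ℕ)
    (m : Fin (Dim d s)) (n : Fin (Dim d t)) :
    m.val * Dim d t + n.val < Dim d (s + t) := by
  rw [Dim_add]; exact mul_add_lt_of_lt m.isLt n.isLt

/-- The characteristic property of the family `Φ(s, m)`: `Φ(0,0) = 1`,
`Φ(e_a, i) = U_{a,i}`, and `Φ(s,m)·Φ(t,n) = Φ(s+t, m·d(t)+n)`. -/
def LexFamilyProp {k : ℕ} (d : Fin k → ℕ) {B : Type} [CStarAlgebra B]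
    (U : ∀ a : Fin k, Fin (d a) → B)
    (Φ : ∀ s : Fin k → ℕ, Fin (Dim d s) → B) : Prop :=
  Φ 0 ⟨0, by rw [Dim_zero]; exact Nat.zero_lt_one⟩ = 1 ∧
  (∀ (a : Fin k) (i : Fin (d a)),
    Φ (Pi.single a 1) ⟨i.val, by rw [Dim_single]; exact i.isLt⟩ = U a i) ∧
  (∀ (s t : Fin k → ℕ) (m : Fin (Dim d s)) (n : Fin (Dim d t)),
    Φ s m * Φ t n = Φ (s + t) ⟨m.val * Dim d t + n.val, Dim_index_lt d s t m n⟩)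

namespace Stmt15Aux

/-- the standard basis vector `e_b` in `ℕ^k`. -/
def en {k : ℕ} (b : Fin k) : Fin k → ℕ := Pi.single b 1

variable {B : Type} [CStarAlgebra B] {k : ℕ} (d : Fin k → ℕ) (U : ∀ a : Fin k, Fin (d a) → B)

theorem Dim_pos (hd : ∀ a, 0 < d a) (s : Fin k → ℕ) : 0 < Dim d s :=
  Finset.prod_pos fun a _ => pow_pos (hd a) _

theorem Dim_cons (b : Fin k) (s : Fin k → ℕ) :
    Dim d (en b + s) = d b * Dim d s := by rw [Dim_add, en, Dim_single]

theorem sum_cons (b : Fin k) (s : Fin k → ℕ) :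
    ∑ c, (en b + s) c = (∑ c, s c) + 1 := by
  classical
  simp [en, Pi.add_apply, Finset.sum_add_distrib, Finset.sum_pi_single]
  ring

/-- option-valued search for the least index satisfying `p`. -/
def findOpt {k : ℕ} (p : Fin k → Prop) [DecidablePred p] : Option (Fin k) :=
  if h : ∃ i, p i then some (Fin.find p h) else none

theorem findOpt_eq_some_iff {k : ℕ} {p : Fin k → Prop} [DecidablePred p] {i : Fin k} :
    findOpt p = some i ↔ p i ∧ ∀ j, p j → i ≤ j := by
  unfold findOpt
  split_ifs with h
  · rw [Option.some.injEq, Fin.find_eq_iff]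
    constructor
    · rintro ⟨h1, h2⟩
      exact ⟨h1, fun j hj => le_of_not_gt (fun hlt => h2 j hlt hj)⟩
    · rintro ⟨h1, h2⟩
      exact ⟨h1, fun j hj hpj => absurd hj (not_lt.2 (h2 j hpj))⟩
  · simp only [reduceCtorEq, false_iff, not_and]
    exact fun hi => absurd ⟨i, hi⟩ h

theorem findOpt_eq_none_iff {k : ℕ} {p : Fin k → Prop} [DecidablePred p] :
    findOpt p = none ↔ ∀ i, ¬ p i := by
  unfold findOpt
  split_ifs with h
  · simp only [reduceCtorEq, false_iff, not_forall, not_not]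
    exact h
  · simp only [true_iff]
    exact fun i hi => h ⟨i, hi⟩

theorem findOpt_min {k : ℕ} {p : Fin k → Prop} [DecidablePred p] {i j : Fin k}
    (h : findOpt p = some i) (hj : j < i) : ¬ p j :=
  fun hp => absurd hj (not_lt.2 ((findOpt_eq_some_iff.1 h).2 j hp))

theorem findOpt_spec {k : ℕ} (p : Fin k → Prop) [DecidablePred p] {i : Fin k}
    (h : findOpt p = some i) : p i :=
  (findOpt_eq_some_iff.1 h).1

/-- fuel-based auxiliary definition of the family, stripping the least nonzero coordinate. -/
def phiAux (hd : ∀ a, 0 < d a) : ℕ → (Fin k → ℕ) → ℕ → B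
  | 0, _, _ => 1
  | N+1, s, m =>
    (findOpt (fun b => s b ≠ 0)).elim 1 (fun b =>
      U b ⟨(m / Dim d (s - en b)) % d b, Nat.mod_lt _ (hd b)⟩ *
        phiAux hd N (s - en b) (m % Dim d (s - en b)))

def phi (hd : ∀ a, 0 < d a) (s : Fin k → ℕ) (m : ℕ) : B := phiAux d U hd (∑ c, s c) s m

theorem phi_zero (hd : ∀ a, 0 < d a) (m : ℕ) : phi d U hd 0 m = 1 := by
  simp [phi, phiAux]

theorem phi_cons (hd : ∀ a, 0 < d a) {b : Fin k} {s : Fin k → ℕ}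
    (hb : ∀ a, a < b → s a = 0) {i r : ℕ} (hi : i < d b) (hr : r < Dim d s) :
    phi d U hd (en b + s) (i * Dim d s + r) = U b ⟨i, hi⟩ * phi d U hd s r := by
  classical
  have hfind : findOpt (fun c => (en b + s) c ≠ 0) = some b := by
    rw [findOpt_eq_some_iff]
    constructor
    · simp [en, Pi.add_apply]
    · intro j hj
      by_contra hlt
      push_neg at hlt
      apply hj
      simp [en, Pi.add_apply, Pi.single_eq_of_ne (Fin.ne_of_lt hlt), hb j hlt]
  have hsub : (en b + s) - en b = s := by
    funext a
    by_cases h : a = b <;> simp [en, h, Pi.sub_apply, Pi.add_apply]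
  have hDpos : 0 < Dim d s := Dim_pos d hd s
  have hdiv : (i * Dim d s + r) / Dim d s = i := by
    rw [mul_comm, Nat.mul_add_div hDpos, Nat.div_eq_of_lt hr]; rfl
  have hmod : (i * Dim d s + r) % Dim d s = r := by
    rw [mul_comm, Nat.mul_add_mod, Nat.mod_eq_of_lt hr]
  rw [phi, sum_cons]
  show phiAux d U hd ((∑ c, s c) + 1) _ _ = _
  rw [phiAux, hfind, Option.elim_some]
  congr 1
  · exact congrArg (U b) (Fin.ext (show _ % d b = i by rw [hsub, hdiv, Nat.mod_eq_of_lt hi]))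
  · rw [phi, hsub, hmod]

theorem decomp {s : Fin k → ℕ} (hs : s ≠ 0) :
    ∃ (b : Fin k) (s' : Fin k → ℕ), (∀ a, a < b → s' a = 0) ∧ s = en b + s' := by
  classical
  have hex : ∃ b, s b ≠ 0 := by
    by_contra h
    push_neg at h
    exact hs (funext fun a => h a)
  cases hf : findOpt (fun b => s b ≠ 0) with
  | none =>
    exact absurd (funext fun a => not_ne_iff.1 (findOpt_eq_none_iff.1 hf a)) hs
  | some b =>
    refine ⟨b, s - en b, fun a ha => ?_, funext fun a => ?_⟩
    · have h0 : s a = 0 := not_ne_iff.1 (findOpt_min hf ha)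
      simp [en, Pi.sub_apply, h0]
    · have hb : s b ≠ 0 := findOpt_spec _ hf
      by_cases h : a = b
      · subst h
        simp [en, Pi.add_apply, Pi.sub_apply]
        omega
      · simp [en, Pi.add_apply, Pi.sub_apply, Pi.single_eq_of_ne h]


/-- Combined destructor: decomposition of `s` and of the index `m`. -/
theorem phi_step (hd : ∀ a, 0 < d a) {s : Fin k → ℕ} (hs : s ≠ 0) :
    ∃ (b : Fin k) (s' : Fin k → ℕ), (∀ a, a < b → s' a = 0) ∧ s = en b + s' ∧
      ∀ m, m < Dim d s → ∃ (j m' : ℕ) (hj : j < d b), m' < Dim d s' ∧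
        m = j * Dim d s' + m' ∧
        phi d U hd s m = U b ⟨j, hj⟩ * phi d U hd s' m' := by
  obtain ⟨b, s', hb', rfl⟩ := decomp hs
  refine ⟨b, s', hb', rfl, fun m hm => ?_⟩
  have hDpos : 0 < Dim d s' := Dim_pos d hd s'
  have hm' : m < d b * Dim d s' := by rwa [Dim_cons] at hm
  have hj : m / Dim d s' < d b := (Nat.div_lt_iff_lt_mul hDpos).2 hm'
  have hmod : m % Dim d s' < Dim d s' := Nat.mod_lt _ hDpos
  have heq : m = (m / Dim d s') * Dim d s' + m % Dim d s' := by
    rw [mul_comm]; exact (Nat.div_add_mod m (Dim d s')).symm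
  refine ⟨_, _, hj, hmod, heq, ?_⟩
  conv_lhs => rw [heq]
  exact phi_cons d U hd hb' hj hmod

theorem phi_absorb_aux (hd : ∀ a, 0 < d a)
    (hUcomm : ∀ (a b : Fin k) (i q : Fin (d a)) (j p : Fin (d b)),
      i.val * d b + j.val = p.val * d a + q.val → U a i * U b j = U b p * U a q) :
    ∀ N (s : Fin k → ℕ), (∑ c, s c) ≤ N → ∀ (a : Fin k) (i : ℕ) (hi : i < d a)
      (r : ℕ), r < Dim d s →
      U a ⟨i, hi⟩ * phi d U hd s r = phi d U hd (en a + s) (i * Dim d s + r) := by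
  intro N
  induction N with
  | zero =>
    intro s hs a i hi r hr
    have hs0 : s = 0 := by
      funext c
      have := Finset.sum_eq_zero_iff.1 (Nat.le_zero.1 hs) c (Finset.mem_univ c)
      exact this
    subst hs0
    exact (phi_cons d U hd (fun c _ => rfl) hi hr).symm
  | succ N ih =>
    intro s hs a i hi r hr
    by_cases hlead : ∀ c, c < a → s c = 0
    · exact (phi_cons d U hd hlead hi hr).symm
    · push_neg at hlead
      obtain ⟨c, hca, hc⟩ := hlead
      have hs0 : s ≠ 0 := fun h => hc (by rw [h]; rfl)
      obtain ⟨b, s', hb', rfl, hdest⟩ := phi_step d U hd hs0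
      obtain ⟨j, r', hj, hr'', hre, hphi⟩ := hdest r hr
      -- b < a
      have hba : b < a := by
        rcases lt_or_ge b a with h | h
        · exact h
        · exfalso
          rcases lt_or_ge c b with h2 | h2
          · exact hc (by simp [en, Pi.add_apply,
              Pi.single_eq_of_ne (Fin.ne_of_lt h2), hb' c h2])
          · exact absurd (lt_of_lt_of_le hca h) (not_lt.2 h2)
      set Ds' := Dim d s' with hDs'
      set M := i * d b + j with hM
      have hMlt : M < d a * d b := mul_add_lt_of_lt hi hj
      set p := M / d a with hp'
      set q := M % d a with hq'
      have hq : q < d a := Nat.mod_lt _ (hd a)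
      have hp : p < d b := (Nat.div_lt_iff_lt_mul (hd a)).2 (by rw [mul_comm]; exact hMlt)
      have hMpq : p * d a + q = M := by rw [mul_comm]; exact Nat.div_add_mod M (d a)
      have hcomm : U a ⟨i, hi⟩ * U b ⟨j, hj⟩ = U b ⟨p, hp⟩ * U a ⟨q, hq⟩ :=
        hUcomm a b ⟨i, hi⟩ ⟨q, hq⟩ ⟨j, hj⟩ ⟨p, hp⟩ (by simp [hMpq, hM])
      have hsum' : ∑ c, s' c ≤ N := by
        have := sum_cons b s'
        omega
      have hIH := ih s' hsum' a q hq r' hr''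
      have hlead2 : ∀ c, c < b → (en a + s') c = 0 := by
        intro c hcb
        simp [en, Pi.add_apply, Pi.single_eq_of_ne (Fin.ne_of_lt (hcb.trans hba)),
          hb' c hcb]
      have hidx : q * Ds' + r' < Dim d (en a + s') := by
        rw [Dim_cons]; exact mul_add_lt_of_lt hq hr''
      have hstep := phi_cons d U hd (b := b) hlead2 hp hidx
      have hseq : en b + (en a + s') = en a + (en b + s') := by
        funext c; simp [en, Pi.add_apply]; ring
      calc U a ⟨i, hi⟩ * phi d U hd (en b + s') r
          = U a ⟨i, hi⟩ * (U b ⟨j, hj⟩ * phi d U hd s' r') := by rw [hphi]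
        _ = (U b ⟨p, hp⟩ * U a ⟨q, hq⟩) * phi d U hd s' r' := by
            rw [← mul_assoc, hcomm]
        _ = U b ⟨p, hp⟩ * (U a ⟨q, hq⟩ * phi d U hd s' r') := by rw [mul_assoc]
        _ = U b ⟨p, hp⟩ * phi d U hd (en a + s') (q * Ds' + r') := by rw [hIH]
        _ = phi d U hd (en b + (en a + s')) (p * Dim d (en a + s') + (q * Ds' + r')) :=
            hstep.symm
        _ = phi d U hd (en a + (en b + s')) (i * Dim d (en b + s') + r) := by
            rw [hseq]
            congr 1
            rw [Dim_cons, Dim_cons]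
            calc p * (d a * Ds') + (q * Ds' + r') = (p * d a + q) * Ds' + r' := by ring
              _ = M * Ds' + r' := by rw [hMpq]
              _ = i * (d b * Ds') + (j * Ds' + r') := by rw [hM]; ring
              _ = i * (d b * Ds') + r := by rw [← hre]

theorem phi_absorb (hd : ∀ a, 0 < d a)
    (hUcomm : ∀ (a b : Fin k) (i q : Fin (d a)) (j p : Fin (d b)),
      i.val * d b + j.val = p.val * d a + q.val → U a i * U b j = U b p * U a q)
    (s : Fin k → ℕ) (a : Fin k) {i : ℕ} (hi : i < d a) {r : ℕ} (hr : r < Dim d s) :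
    U a ⟨i, hi⟩ * phi d U hd s r = phi d U hd (en a + s) (i * Dim d s + r) :=
  phi_absorb_aux d U hd hUcomm (∑ c, s c) s le_rfl a i hi r hr

theorem phi_mul (hd : ∀ a, 0 < d a)
    (hUcomm : ∀ (a b : Fin k) (i q : Fin (d a)) (j p : Fin (d b)),
      i.val * d b + j.val = p.val * d a + q.val → U a i * U b j = U b p * U a q) :
    ∀ N (s : Fin k → ℕ), (∑ c, s c) ≤ N → ∀ (t : Fin k → ℕ) (m n : ℕ),
      m < Dim d s → n < Dim d t →
      phi d U hd s m * phi d U hd t n = phi d U hd (s + t) (m * Dim d t + n) := by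
  intro N
  induction N with
  | zero =>
    intro s hs t m n hm hn
    have hs0 : s = 0 := by
      funext c
      exact Finset.sum_eq_zero_iff.1 (Nat.le_zero.1 hs) c (Finset.mem_univ c)
    subst hs0
    have hm0 : m = 0 := by
      have := hm; rw [Dim_zero] at this; omega
    subst hm0
    rw [phi_zero, one_mul]
    simp
  | succ N ih =>
    intro s hs t m n hm hn
    by_cases hs0 : s = 0
    · subst hs0
      have hm0 : m = 0 := by
        have := hm; rw [Dim_zero] at this; omega
      subst hm0
      rw [phi_zero, one_mul]
      simp
    · obtain ⟨b, s', hb', rfl, hdest⟩ := phi_step d U hd hs0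
      obtain ⟨j, m', hj, hm'', hre, hphi⟩ := hdest m hm
      have hsum' : ∑ c, s' c ≤ N := by
        have := sum_cons b s'
        omega
      have hIH := ih s' hsum' t m' n hm'' hn
      have hidx : m' * Dim d t + n < Dim d (s' + t) := by
        rw [Dim_add]; exact mul_add_lt_of_lt hm'' hn
      have habs := phi_absorb d U hd hUcomm (s' + t) b hj hidx
      calc phi d U hd (en b + s') m * phi d U hd t n
          = U b ⟨j, hj⟩ * (phi d U hd s' m' * phi d U hd t n) := by
            rw [hphi, mul_assoc]
        _ = U b ⟨j, hj⟩ * phi d U hd (s' + t) (m' * Dim d t + n) := by rw [hIH]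
        _ = phi d U hd (en b + (s' + t)) (j * Dim d (s' + t) + (m' * Dim d t + n)) :=
            habs
        _ = phi d U hd ((en b + s') + t) (m * Dim d t + n) := by
            rw [← add_assoc]
            congr 1
            rw [Dim_add, hre]
            ring


theorem phi_single (hd : ∀ a, 0 < d a) (a : Fin k) (i : Fin (d a)) :
    phi d U hd (Pi.single a 1) i.val = U a i := by
  have h0 : (0 : Fin k → ℕ) = 0 := rfl
  have h := phi_cons d U hd (b := a) (s := 0) (fun c _ => rfl) i.isLt
    (by rw [Dim_zero]; exact Nat.zero_lt_one) (r := 0)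
  have hs : en a + 0 = Pi.single a 1 := by funext c; simp [en]
  have hidx : i.val * Dim d 0 + 0 = i.val := by rw [Dim_zero]; ring
  rw [hs, hidx] at h
  rw [h, phi_zero, mul_one]

theorem phi_isometry (hd : ∀ a, 0 < d a)
    (hUiso : ∀ (a : Fin k) (i : Fin (d a)), star (U a i) * U a i = 1) :
    ∀ N (s : Fin k → ℕ), (∑ c, s c) ≤ N → ∀ m, m < Dim d s →
      star (phi d U hd s m) * phi d U hd s m = 1 := by
  intro N
  induction N with
  | zero =>
    intro s hs m hm
    have hs0 : s = 0 := funext fun c =>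
      Finset.sum_eq_zero_iff.1 (Nat.le_zero.1 hs) c (Finset.mem_univ c)
    subst hs0
    rw [phi_zero]; simp
  | succ N ih =>
    intro s hs m hm
    by_cases hs0 : s = 0
    · subst hs0; rw [phi_zero]; simp
    · obtain ⟨b, s', hb', rfl, hdest⟩ := phi_step d U hd hs0
      obtain ⟨j, m', hj, hm'', _, hphi⟩ := hdest m hm
      have hsum' : ∑ c, s' c ≤ N := by have := sum_cons b s'; omega
      rw [hphi, star_mul, mul_assoc, ← mul_assoc (star (U b ⟨j, hj⟩)), hUiso,
        one_mul, ih s' hsum' m' hm'']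

theorem phi_orth (hd : ∀ a, 0 < d a)
    (hUiso : ∀ (a : Fin k) (i : Fin (d a)), star (U a i) * U a i = 1)
    (hUorth : ∀ (a : Fin k) (i j : Fin (d a)), i ≠ j → star (U a i) * U a j = 0) :
    ∀ N (s : Fin k → ℕ), (∑ c, s c) ≤ N → ∀ m m', m < Dim d s → m' < Dim d s →
      m ≠ m' → star (phi d U hd s m) * phi d U hd s m' = 0 := by
  intro N
  induction N with
  | zero =>
    intro s hs m m' hm hm' hne
    have hs0 : s = 0 := funext fun c =>
      Finset.sum_eq_zero_iff.1 (Nat.le_zero.1 hs) c (Finset.mem_univ c)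
    subst hs0
    rw [Dim_zero] at hm hm'
    omega
  | succ N ih =>
    intro s hs m m' hm hm' hne
    by_cases hs0 : s = 0
    · subst hs0
      rw [Dim_zero] at hm hm'
      omega
    · obtain ⟨b, s', hb', rfl, hdest⟩ := phi_step d U hd hs0
      obtain ⟨j, r, hj, hr, hre, hphi⟩ := hdest m hm
      obtain ⟨j', r', hj', hr', hre', hphi'⟩ := hdest m' hm'
      have hsum' : ∑ c, s' c ≤ N := by have := sum_cons b s'; omega
      rw [hphi, hphi', star_mul, mul_assoc, ← mul_assoc (star (U b ⟨j, hj⟩))]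
      by_cases hjj : j = j'
      · subst hjj
        have hrr : r ≠ r' := by omega
        rw [hUiso, one_mul, ih s' hsum' r r' hr hr' hrr]
      · rw [hUorth b ⟨j, hj⟩ ⟨j', hj'⟩ (by simp [Fin.ext_iff]; omega),
          zero_mul, mul_zero]

theorem sum_range_mul {M N : ℕ} (f : ℕ → B) :
    ∑ m ∈ Finset.range (M * N), f m =
      ∑ i ∈ Finset.range M, ∑ j ∈ Finset.range N, f (i * N + j) := by
  induction M with
  | zero => simp
  | succ M ih =>
    rw [Nat.succ_mul, Finset.sum_range_add, ih, Finset.sum_range_succ]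

theorem phi_full (hd : ∀ a, 0 < d a)
    (hfull : ∀ a : Fin k, ∑ i, U a i * star (U a i) = 1) :
    ∀ N (s : Fin k → ℕ), (∑ c, s c) ≤ N →
      ∑ m ∈ Finset.range (Dim d s), phi d U hd s m * star (phi d U hd s m) = 1 := by
  intro N
  induction N with
  | zero =>
    intro s hs
    have hs0 : s = 0 := funext fun c =>
      Finset.sum_eq_zero_iff.1 (Nat.le_zero.1 hs) c (Finset.mem_univ c)
    subst hs0
    rw [Dim_zero]
    simp [phi_zero]
  | succ N ih =>
    intro s hs
    by_cases hs0 : s = 0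
    · subst hs0; rw [Dim_zero]; simp [phi_zero]
    · obtain ⟨b, s', hb', rfl, hdest⟩ := phi_step d U hd hs0
      have hsum' : ∑ c, s' c ≤ N := by have := sum_cons b s'; omega
      have hIH := ih s' hsum'
      rw [Dim_cons, sum_range_mul,
        ← Fin.sum_univ_eq_sum_range (fun i => ∑ j ∈ Finset.range (Dim d s'),
            phi d U hd (en b + s') (i * Dim d s' + j) *
              star (phi d U hd (en b + s') (i * Dim d s' + j))) (d b),
        ← hfull b]
      apply Finset.sum_congr rfl
      intro i _
      have hinner : ∀ j ∈ Finset.range (Dim d s'),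
          phi d U hd (en b + s') (i.val * Dim d s' + j) *
            star (phi d U hd (en b + s') (i.val * Dim d s' + j)) =
          U b i * (phi d U hd s' j * star (phi d U hd s' j)) * star (U b i) := by
        intro j hjr
        rw [phi_cons d U hd hb' i.isLt (Finset.mem_range.1 hjr), Fin.eta, star_mul]
        simp [mul_assoc]
      rw [Finset.sum_congr rfl hinner, ← Finset.sum_mul, ← Finset.mul_sum, hIH, mul_one]

end Stmt15Aux

open Stmt15Aux

/-- Let `k ≥ 1`, let `d_1, …, d_k` be positive integers, and for
`s ∈ ℕ^k` write `d(s) = Π_a d_a ^ s_a`.  Let `B` be a unital C*-algebra containing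
isometries `U_{a,i}` (`1 ≤ a ≤ k`, `0 ≤ i ≤ d_a − 1`) with `U_{a,i}* U_{a,j} = 0` for
`i ≠ j` and `U_{a,i} U_{b,j} = U_{b,p} U_{a,q}` whenever `i·d_b + j = p·d_a + q`.
Then there is a unique family `Φ(s,m) ∈ B` (`s ∈ ℕ^k`, `0 ≤ m ≤ d(s) − 1`) with
`Φ(0,0) = 1`, `Φ(e_a, i) = U_{a,i}`, and `Φ(s,m)·Φ(t,n) = Φ(s+t, m·d(t)+n)`.
Moreover each `Φ(s,m)` is an isometry, `Φ(s,m)* Φ(s,m') = 0` for `m ≠ m'`, and if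
`Σ_i U_{a,i} U_{a,i}* = 1` for every `a`, then `Σ_m Φ(s,m) Φ(s,m)* = 1` for every `s`. -/
theorem stmt15 {B : Type} [CStarAlgebra B] (k : ℕ) (hk : 1 ≤ k)
    (d : Fin k → ℕ) (hd : ∀ a, 0 < d a)
    (U : ∀ a : Fin k, Fin (d a) → B)
    (hUiso : ∀ (a : Fin k) (i : Fin (d a)), star (U a i) * U a i = 1)
    (hUorth : ∀ (a : Fin k) (i j : Fin (d a)), i ≠ j → star (U a i) * U a j = 0)
    (hUcomm : ∀ (a b : Fin k) (i q : Fin (d a)) (j p : Fin (d b)),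
      i.val * d b + j.val = p.val * d a + q.val → U a i * U b j = U b p * U a q) :
    ∃ Φ : ∀ s : Fin k → ℕ, Fin (Dim d s) → B,
      LexFamilyProp d U Φ ∧
      (∀ Ψ : ∀ s : Fin k → ℕ, Fin (Dim d s) → B, LexFamilyProp d U Ψ → Ψ = Φ) ∧
      (∀ (s : Fin k → ℕ) (m : Fin (Dim d s)), star (Φ s m) * Φ s m = 1) ∧
      (∀ (s : Fin k → ℕ) (m m' : Fin (Dim d s)), m ≠ m' → star (Φ s m) * Φ s m' = 0) ∧
      ((∀ a : Fin k, ∑ i, U a i * star (U a i) = 1) →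
        ∀ s : Fin k → ℕ, ∑ m, Φ s m * star (Φ s m) = 1) := by
  classical
  refine ⟨fun s m => phi d U hd s m.val, ⟨?_, ?_, ?_⟩, ?_, ?_, ?_, ?_⟩
  · exact phi_zero d U hd 0
  · intro a i
    exact phi_single d U hd a i
  · intro s t m n
    exact phi_mul d U hd hUcomm (∑ c, s c) s le_rfl t m.val n.val m.isLt n.isLt
  · -- uniqueness
    intro Ψ hΨ
    obtain ⟨h1, h2, h3⟩ := hΨ
    funext s m
    suffices H : ∀ N (s : Fin k → ℕ), (∑ c, s c) ≤ N → ∀ m : Fin (Dim d s),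
        Ψ s m = phi d U hd s m.val from H (∑ c, s c) s le_rfl m
    intro N
    induction N with
    | zero =>
      intro s hs m
      have hs0 : s = 0 := funext fun c =>
        Finset.sum_eq_zero_iff.1 (Nat.le_zero.1 hs) c (Finset.mem_univ c)
      subst hs0
      have hm0 : m.val = 0 := by
        have := m.isLt; have hD := Dim_zero d; omega
      have hm : m = ⟨0, by rw [Dim_zero]; exact Nat.zero_lt_one⟩ := Fin.ext hm0
      rw [hm, h1, phi_zero]
    | succ N ih =>
      intro s hs m
      by_cases hs0 : s = 0
      · subst hs0
        have hm0 : m.val = 0 := by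
          have := m.isLt; have hD := Dim_zero d; omega
        have hm : m = ⟨0, by rw [Dim_zero]; exact Nat.zero_lt_one⟩ := Fin.ext hm0
        rw [hm, h1, phi_zero]
      · obtain ⟨b, s', hb', rfl, hdest⟩ := phi_step d U hd hs0
        obtain ⟨j, m', hj, hm'', hre, hphi⟩ := hdest m.val m.isLt
        have hsum' : ∑ c, s' c ≤ N := by have := sum_cons b s'; omega
        have hjD : j < Dim d (Pi.single b 1) := by rw [Dim_single]; exact hj
        have h3' := h3 (Pi.single b 1) s' ⟨j, hjD⟩ ⟨m', hm''⟩
        have hm2 : m = ⟨j * Dim d s' + m',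
            Dim_index_lt d (Pi.single b 1) s' ⟨j, hjD⟩ ⟨m', hm''⟩⟩ := Fin.ext (by
          simpa using hre)
        have e1 : Ψ (Pi.single b 1) ⟨j, hjD⟩ = U b ⟨j, hj⟩ := h2 b ⟨j, hj⟩
        have e2 : Ψ s' ⟨m', hm''⟩ = phi d U hd s' m' := ih s' hsum' ⟨m', hm''⟩
        calc Ψ (en b + s') m
            = Ψ (Pi.single b 1 + s') ⟨j * Dim d s' + m',
                Dim_index_lt d (Pi.single b 1) s' ⟨j, hjD⟩ ⟨m', hm''⟩⟩ := by
              exact congrArg (Ψ (en b + s')) hm2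
          _ = Ψ (Pi.single b 1) ⟨j, hjD⟩ * Ψ s' ⟨m', hm''⟩ := h3'.symm
          _ = U b ⟨j, hj⟩ * phi d U hd s' m' := by rw [e1, e2]
          _ = phi d U hd (en b + s') m.val := hphi.symm
  · intro s m
    exact phi_isometry d U hd hUiso (∑ c, s c) s le_rfl m.val m.isLt
  · intro s m m' hne
    exact phi_orth d U hd hUiso hUorth (∑ c, s c) s le_rfl m.val m'.val m.isLt m'.isLt
      (fun h => hne (Fin.ext h))
  · intro hfull s
    rw [Fin.sum_univ_eq_sum_range (fun v => phi d U hd s v * star (phi d U hd s v))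
      (Dim d s)]
    exact phi_full d U hd hfull (∑ c, s c) s le_rfl

end
end

section
/- Let P be a monoid and let d be a monoid homomorphism from P to the positive integers under multiplication. For r ∈ P and x ∈ ℂ^{d(r)} define the bounded operator S_r(x) := Σ_{j=0}^{d(r)−1} (x | δ_j)·S_{d(r),j} on L²([0,1)). Then S is a nontrivial Cuntz representation of the lexicographic product system E(d) in the C*-algebra of bounded operators on L²([0,1)): each S_r is linear, S_{rs}(x·y) = S_r(x)·S_s(y) for x ∈ ℂ^{d(r)} and y ∈ ℂ^{d(s)} (where x·y denotes the lexicographic multiplication), S_r(y)*·S_r(x) = (x|y)·id for x, y ∈ ℂ^{d(r)}, and Σ_{j=0}^{d(r)−1} S_r(δ_j)·S_r(δ_j)* = id for every r ∈ P. -/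
open MeasureTheory

noncomputable section

lemma IsShiftOp.unique {n j : ℕ} {A B : L2I →L[ℂ] L2I} (hA : IsShiftOp n j A)
    (hB : IsShiftOp n j B) : A = B := by
  ext ξ
  exact (hA ξ).trans (hB ξ).symm

lemma cond_iff {n j : ℕ} (hn : 0 < n) {t : ℝ} :
    ((j : ℝ) / n ≤ t ∧ t < ((j : ℝ) + 1) / n) ↔
      ((0:ℝ) ≤ (n:ℝ) * t - j ∧ (n:ℝ) * t - j < 1) := by
  have hn' : (0:ℝ) < n := by exact_mod_cast hn
  rw [div_le_iff₀ hn', lt_div_iff₀ hn']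
  constructor <;> rintro ⟨h1, h2⟩ <;> constructor <;> nlinarith

example : True := trivial

lemma qmp_affine (n j : ℕ) (hn : 0 < n) :
    Measure.QuasiMeasurePreserving (fun t : ℝ => (n:ℝ) * t - j) volume volume := by
  have hn0 : ((n:ℝ)) ≠ 0 := by positivity
  refine ⟨by fun_prop, ?_⟩
  have : (fun t : ℝ => (n:ℝ) * t - j) = (fun x : ℝ => x - (j:ℝ)) ∘ (fun t : ℝ => (n:ℝ) * t) := rfl
  rw [this, ← Measure.map_map (by fun_prop) (by fun_prop), Real.map_volume_mul_left hn0,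
    Measure.map_smul, (measurePreserving_sub_right volume (j:ℝ)).map_eq]
  exact Measure.smul_absolutelyContinuous

/-- transfer a.e. statements along `t ↦ n t - j`. -/
lemma ae_affine_transfer {n j : ℕ} (hn : 0 < n) {f g : ℝ → ℂ} (h : f =ᵐ[μ01] g) :
    ∀ᵐ t ∂(volume : Measure ℝ), ((j : ℝ) / n ≤ t ∧ t < ((j : ℝ) + 1) / n) →
      f ((n:ℝ) * t - j) = g ((n:ℝ) * t - j) := by
  have h' : ∀ᵐ u ∂(volume : Measure ℝ), u ∈ Set.Ico (0:ℝ) 1 → f u = g u :=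
    (ae_restrict_iff' measurableSet_Ico).mp h
  filter_upwards [(qmp_affine n j hn).ae h'] with t ht hc
  exact ht (Set.mem_Ico.mpr ((cond_iff hn).mp hc))

lemma Ico_subset01 {n j : ℕ} (hn : 0 < n) (hj : j < n) :
    Set.Ico ((j:ℝ)/n) (((j:ℝ)+1)/n) ⊆ Set.Ico (0:ℝ) 1 := by
  have hn' : (0:ℝ) < n := by exact_mod_cast hn
  have hj' : (j:ℝ) + 1 ≤ n := by exact_mod_cast hj
  intro t ht
  obtain ⟨h1, h2⟩ := ht
  constructor
  · exact le_trans (by positivity) h1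
  · exact lt_of_lt_of_le h2 (by rw [div_le_one hn']; exact hj')

lemma sqrt_mul_self' (n : ℕ) :
    (Real.sqrt n : ℂ) * (Real.sqrt n : ℂ) = (n : ℂ) := by
  rw [← Complex.ofReal_mul, Real.mul_self_sqrt (by positivity)]
  norm_cast

open scoped InnerProductSpace in
lemma inner_shift {n j k : ℕ} (hn : 0 < n) (hj : j < n) (hk : k < n)
    {A B : L2I →L[ℂ] L2I} (hA : IsShiftOp n j A) (hB : IsShiftOp n k B) (ξ η : L2I) :
    ⟪A ξ, B η⟫_ℂ = if j = k then ⟪ξ, η⟫_ℂ else 0 := by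
  have hn' : (0:ℝ) < n := by exact_mod_cast hn
  have hnC : (n:ℂ) ≠ 0 := by exact_mod_cast hn.ne'
  set F : ℝ → ℂ := fun t : ℝ =>
    if (j : ℝ) / n ≤ t ∧ t < ((j : ℝ) + 1) / n
      then (Real.sqrt n : ℂ) * (ξ : ℝ → ℂ) (n * t - j) else 0 with hF
  set G : ℝ → ℂ := fun t : ℝ =>
    if (k : ℝ) / n ≤ t ∧ t < ((k : ℝ) + 1) / n
      then (Real.sqrt n : ℂ) * (η : ℝ → ℂ) (n * t - k) else 0 with hG
  have key : ⟪A ξ, B η⟫_ℂ = ∫ t, (starRingEnd ℂ) (F t) * G t ∂μ01 := by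
    rw [L2.inner_def]
    refine integral_congr_ae ?_
    filter_upwards [hA ξ, hB η] with t h1 h2
    rw [RCLike.inner_apply, h1, h2]
    exact mul_comm _ _
  by_cases hjk : j = k
  · subst hjk
    rw [if_pos rfl, key]
    set H : ℝ → ℂ := fun u : ℝ =>
      if (0:ℝ) ≤ u ∧ u < 1 then (starRingEnd ℂ) ((ξ : ℝ → ℂ) u) * (η : ℝ → ℂ) u else 0 with hH
    have hpt : ∀ t : ℝ, (starRingEnd ℂ) (F t) * G t = (n:ℂ) * H ((n:ℝ) * t - j) := by
      intro t
      by_cases hc : (j : ℝ) / n ≤ t ∧ t < ((j : ℝ) + 1) / n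
      · rw [hF, hG, hH]
        simp only [if_pos hc, if_pos ((cond_iff hn).mp hc)]
        rw [map_mul]
        rw [Complex.conj_ofReal]
        ring_nf
        rw [show (Real.sqrt n : ℂ)^2 = (Real.sqrt n : ℂ) * (Real.sqrt n : ℂ) from sq _,
          sqrt_mul_self' n]
        ring
      · rw [hF, hG, hH]
        simp only [if_neg hc, if_neg (fun h => hc ((cond_iff hn).mpr h))]
        simp
    simp only [hpt]
    have hsupp : ∀ t : ℝ, t ∉ Set.Ico (0:ℝ) 1 → (n:ℂ) * H ((n:ℝ) * t - j) = 0 := by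
      intro t ht
      have hcond : ¬((0:ℝ) ≤ (n:ℝ)*t - j ∧ (n:ℝ)*t - j < 1) :=
        fun h => ht (Ico_subset01 hn hj ((cond_iff hn).mpr h))
      simp only [hH]
      rw [if_neg hcond, mul_zero]
    have : ∫ t, (n:ℂ) * H ((n:ℝ) * t - j) ∂μ01 = ∫ t, (n:ℂ) * H ((n:ℝ) * t - j) := by
      exact setIntegral_eq_integral_of_forall_compl_eq_zero hsupp
    rw [this, integral_const_mul]
    have comp1 : ∫ t : ℝ, H ((n:ℝ) * t - j)
        = |((n:ℝ))⁻¹| • ∫ y : ℝ, H (y - j) :=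
      MeasureTheory.Measure.integral_comp_mul_left (fun y : ℝ => H (y - (j:ℝ))) (n:ℝ)
    rw [comp1, integral_sub_right_eq_self H (j:ℝ)]
    have hint : ∫ y : ℝ, H y = ⟪ξ, η⟫_ℂ := by
      rw [L2.inner_def]
      have hHind : H = Set.indicator (Set.Ico (0:ℝ) 1)
          (fun u => (starRingEnd ℂ) ((ξ : ℝ → ℂ) u) * (η : ℝ → ℂ) u) := by
        funext u
        simp only [hH, Set.indicator_apply, Set.mem_Ico]
      rw [hHind, integral_indicator measurableSet_Ico]
      refine integral_congr_ae (Filter.Eventually.of_forall fun t => ?_)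
      simp [RCLike.inner_apply, mul_comm]
    rw [hint, abs_of_nonneg (by positivity : (0:ℝ) ≤ ((n:ℝ))⁻¹)]
    rw [Complex.real_smul]
    push_cast
    field_simp
  · rw [if_neg hjk, key]
    have hz : ∀ t : ℝ, (starRingEnd ℂ) (F t) * G t = 0 := by
      intro t
      by_cases h1 : (j : ℝ) / n ≤ t ∧ t < ((j : ℝ) + 1) / n
      · by_cases h2 : (k : ℝ) / n ≤ t ∧ t < ((k : ℝ) + 1) / n
        · exfalso
          obtain ⟨a1, a2⟩ := (cond_iff hn).mp h1
          obtain ⟨b1, b2⟩ := (cond_iff hn).mp h2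
          have : (j:ℝ) < (k:ℝ) + 1 := by linarith
          have h' : (k:ℝ) < (j:ℝ) + 1 := by linarith
          have hj2 : j < k + 1 := by exact_mod_cast this
          have hk2 : k < j + 1 := by exact_mod_cast h'
          omega
        · rw [hG]; simp [if_neg h2]
      · rw [hF]; simp [if_neg h1]
    simp only [hz]
    simp

lemma shift_comp {n m j k : ℕ} (hn : 0 < n) (hm : 0 < m) (hj : j < n) (hk : k < m)
    {A B : L2I →L[ℂ] L2I} (hA : IsShiftOp n j A) (hB : IsShiftOp m k B) :
    IsShiftOp (n * m) (j * m + k) (A.comp B) := by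
  intro ξ
  have hn' : (0:ℝ) < n := by exact_mod_cast hn
  have hm' : (0:ℝ) < m := by exact_mod_cast hm
  have h1 := hA (B ξ)
  have h2 : ∀ᵐ t ∂μ01, ((j:ℝ)/n ≤ t ∧ t < ((j:ℝ)+1)/n) →
      (B ξ : ℝ → ℂ) ((n:ℝ)*t - j) =
        (if (k:ℝ)/m ≤ ((n:ℝ)*t - j) ∧ ((n:ℝ)*t - j) < ((k:ℝ)+1)/m
          then (Real.sqrt m : ℂ) * (ξ : ℝ → ℂ) (m*((n:ℝ)*t - j)-k) else 0) :=
    (ae_affine_transfer hn (hB ξ)).filter_mono (ae_mono Measure.restrict_le_self)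
  simp only [ContinuousLinearMap.comp_apply]
  filter_upwards [h1, h2] with t ht1 ht2
  rw [ht1]
  -- now pointwise computation
  have harith : (m:ℝ)*((n:ℝ)*t - j) - k = ((n*m : ℕ):ℝ) * t - ((j*m+k : ℕ):ℝ) := by
    push_cast; ring
  have hcondiff : (((k:ℝ)/m ≤ ((n:ℝ)*t - j) ∧ ((n:ℝ)*t - j) < ((k:ℝ)+1)/m)) ↔
      ((((j*m+k : ℕ)):ℝ) / ((n*m : ℕ):ℝ) ≤ t ∧ t < ((((j*m+k : ℕ)):ℝ) + 1) / ((n*m : ℕ):ℝ)) := by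
    rw [cond_iff hm, cond_iff (Nat.mul_pos hn hm), harith]
  have himp : ((((j*m+k : ℕ)):ℝ) / ((n*m : ℕ):ℝ) ≤ t ∧ t < ((((j*m+k : ℕ)):ℝ) + 1) / ((n*m : ℕ):ℝ))
      → ((j:ℝ)/n ≤ t ∧ t < ((j:ℝ)+1)/n) := by
    intro hc
    obtain ⟨c1, c2⟩ := (cond_iff (Nat.mul_pos hn hm)).mp hc
    push_cast at c1 c2
    rw [cond_iff hn]
    have hk' : (k:ℝ) + 1 ≤ m := by exact_mod_cast hk
    constructor <;> nlinarith [Nat.cast_nonneg (α := ℝ) k]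
  by_cases hc : ((((j*m+k : ℕ)):ℝ) / ((n*m : ℕ):ℝ) ≤ t ∧ t < ((((j*m+k : ℕ)):ℝ) + 1) / ((n*m : ℕ):ℝ))
  · rw [if_pos (himp hc), ht2 (himp hc), if_pos (hcondiff.mpr hc), if_pos hc, harith]
    rw [← mul_assoc, ← Complex.ofReal_mul, ← Real.sqrt_mul (by positivity)]
    push_cast
    ring_nf
  · rw [if_neg hc]
    by_cases hj' : ((j:ℝ)/n ≤ t ∧ t < ((j:ℝ)+1)/n)
    · rw [if_pos hj', ht2 hj', if_neg (fun h => hc (hcondiff.mp h)), mul_zero]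
    · rw [if_neg hj']

lemma Lp.coeFn_sum' {ι : Type*} (s : Finset ι) (f : ι → L2I) :
    ⇑(∑ i ∈ s, f i) =ᵐ[μ01] fun t => ∑ i ∈ s, (f i : ℝ → ℂ) t := by
  classical
  induction s using Finset.induction_on with
  | empty => simp only [Finset.sum_empty]; exact Lp.coeFn_zero (E := ℂ) (p := 2) (μ := μ01)
  | insert _ _ hx ih =>
    rename_i a s'
    filter_upwards [Lp.coeFn_add (f a) (∑ i ∈ s', f i), ih] with t h1 h2
    rw [Finset.sum_insert hx, h1, Finset.sum_insert hx]
    simp only [Pi.add_apply, h2]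

lemma exists_decomp {n : ℕ} (hn : 0 < n) {T : ℕ → (L2I →L[ℂ] L2I)}
    (hT : ∀ k, k < n → IsShiftOp n k (T k)) (ξ : L2I) :
    ∃ c : Fin n → L2I, ξ = ∑ k : Fin n, T k.val (c k) := by
  have hn' : (0:ℝ) < n := by exact_mod_cast hn
  have hne : ((n:ℝ)) ≠ 0 := hn'.ne'
  -- the inverse affine map
  set φ : ℕ → ℝ → ℝ := fun k t => (t + k) / n with hφ
  -- measurable embedding
  have hemb : ∀ k : ℕ, MeasurableEmbedding (φ k) := by
    intro k
    have : φ k = fun t => ((n:ℝ))⁻¹ * (t + k) := by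
      funext t; rw [hφ]; field_simp
    rw [this]
    exact (((Homeomorph.addRight (k:ℝ)).toMeasurableEquiv.trans
      (Homeomorph.mulLeft₀ ((n:ℝ))⁻¹ (by positivity)).toMeasurableEquiv)).measurableEmbedding
  have hpre : ∀ k : ℕ, k < n → (φ k) ⁻¹' (Set.Ico ((k:ℝ)/n) (((k:ℝ)+1)/n)) =
      Set.Ico (0:ℝ) 1 := by
    intro k _
    ext t
    simp only [Set.mem_preimage, Set.mem_Ico, hφ]
    rw [div_le_div_iff_of_pos_right hn', div_lt_div_iff_of_pos_right hn']
    constructor <;> intro ⟨a, b⟩ <;> constructor <;> linarith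
  have hmap : ∀ k : ℕ, k < n → Measure.map (φ k) μ01 =
      (ENNReal.ofReal n) • (μ01.restrict (Set.Ico ((k:ℝ)/n) (((k:ℝ)+1)/n))) := by
    intro k hk
    have h1 : Measure.map (φ k) volume = (ENNReal.ofReal n) • volume := by
      have : φ k = (fun x : ℝ => ((n:ℝ))⁻¹ * x) ∘ (fun t : ℝ => t + k) := by
        funext t; simp only [hφ, Function.comp_apply]; field_simp
      rw [this, ← Measure.map_map (by fun_prop) (by fun_prop),
        (measurePreserving_add_right volume (k:ℝ)).map_eq,
        Real.map_volume_mul_left (by positivity : ((n:ℝ))⁻¹ ≠ 0), inv_inv,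
        abs_of_nonneg hn'.le]
    have h2 : μ01.restrict (Set.Ico ((k:ℝ)/n) (((k:ℝ)+1)/n)) =
        volume.restrict (Set.Ico ((k:ℝ)/n) (((k:ℝ)+1)/n)) := by
      rw [Measure.restrict_restrict measurableSet_Ico,
        Set.inter_eq_self_of_subset_left (Ico_subset01 hn hk)]
    calc Measure.map (φ k) μ01
        = Measure.map (φ k) (volume.restrict ((φ k) ⁻¹' (Set.Ico ((k:ℝ)/n) (((k:ℝ)+1)/n)))) := by
          rw [hpre k hk]
      _ = (Measure.map (φ k) volume).restrict (Set.Ico ((k:ℝ)/n) (((k:ℝ)+1)/n)) :=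
          ((hemb k).restrict_map volume _).symm
      _ = (ENNReal.ofReal n) • (μ01.restrict (Set.Ico ((k:ℝ)/n) (((k:ℝ)+1)/n))) := by
          rw [h1, h2, Measure.restrict_smul]
  -- the candidate functions
  have hmem : ∀ k : ℕ, k < n → MemLp (fun t : ℝ =>
      ((Real.sqrt n : ℂ))⁻¹ * (ξ : ℝ → ℂ) ((t + k)/n)) 2 μ01 := by
    intro k hk
    have hm1 : MemLp (ξ : ℝ → ℂ) 2 (Measure.map (φ k) μ01) := by
      rw [hmap k hk]
      exact ((Lp.memLp ξ).restrict _).smul_measure ENNReal.ofReal_ne_top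
    have hm2 : MemLp ((ξ : ℝ → ℂ) ∘ (φ k)) 2 μ01 :=
      hm1.comp_of_map (hemb k).measurable.aemeasurable
    exact hm2.const_mul _
  set c : Fin n → L2I := fun k => ((hmem k.val k.isLt).toLp _) with hc
  refine ⟨c, ?_⟩
  have hterm : ∀ k : Fin n, (T k.val (c k) : ℝ → ℂ) =ᵐ[μ01] fun t =>
      if (k.val : ℝ) / n ≤ t ∧ t < ((k.val : ℝ) + 1) / n then (ξ : ℝ → ℂ) t else 0 := by
    intro k
    have h1 := hT k.val k.isLt (c k)
    have h2 : ∀ᵐ t ∂μ01, ((k.val:ℝ)/n ≤ t ∧ t < ((k.val:ℝ)+1)/n) →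
        (c k : ℝ → ℂ) ((n:ℝ)*t - k.val) = (fun u : ℝ =>
          ((Real.sqrt n : ℂ))⁻¹ * (ξ : ℝ → ℂ) ((u + k.val)/n)) ((n:ℝ)*t - k.val) :=
      (ae_affine_transfer hn ((hmem k.val k.isLt).coeFn_toLp)).filter_mono
        (ae_mono Measure.restrict_le_self)
    filter_upwards [h1, h2] with t ht1 ht2
    rw [ht1]
    by_cases hcond : ((k.val:ℝ)/n ≤ t ∧ t < ((k.val:ℝ)+1)/n)
    · rw [if_pos hcond, if_pos hcond, ht2 hcond]
      have harg : (((n:ℝ)*t - k.val) + k.val)/n = t := by field_simp; ring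
      rw [harg, ← mul_assoc]
      have hs : (Real.sqrt n : ℂ) ≠ 0 := by
        simp only [ne_eq, Complex.ofReal_eq_zero]
        positivity
      rw [mul_inv_cancel₀ hs, one_mul]
    · rw [if_neg hcond, if_neg hcond]
  -- sum up
  symm
  apply Lp.ext
  have hsum := Lp.coeFn_sum' Finset.univ (fun k : Fin n => T k.val (c k))
  have hae : ∀ᵐ t ∂μ01, ∀ k : Fin n, (T k.val (c k) : ℝ → ℂ) t =
      (if (k.val : ℝ) / n ≤ t ∧ t < ((k.val : ℝ) + 1) / n then (ξ : ℝ → ℂ) t else 0) := by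
    rw [MeasureTheory.ae_all_iff]
    exact fun k => hterm k
  have hmem01 : ∀ᵐ t ∂μ01, t ∈ Set.Ico (0:ℝ) 1 :=
    (ae_restrict_iff' measurableSet_Ico).mpr (Filter.Eventually.of_forall fun t ht => ht)
  filter_upwards [hsum, hae, hmem01] with t h1 h2 h3
  rw [h1]
  simp only [h2]
  -- pointwise: exactly one interval contains t
  obtain ⟨ht0, ht1⟩ := h3
  have hnt0 : (0:ℝ) ≤ (n:ℝ) * t := by positivity
  set k0 : ℕ := Nat.floor ((n:ℝ) * t) with hk0
  have hk0n : k0 < n := by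
    rw [hk0]
    rw [Nat.floor_lt hnt0]
    nlinarith
  have hcondk : ∀ k : ℕ, k < n → (((k:ℝ)/n ≤ t ∧ t < ((k:ℝ)+1)/n) ↔ k = k0) := by
    intro k _
    rw [cond_iff hn, hk0]
    constructor
    · intro ⟨a, b⟩
      symm
      rw [Nat.floor_eq_iff hnt0]
      push_cast
      constructor <;> linarith
    · intro h
      subst h
      have h1 := Nat.floor_le hnt0
      have h2 := Nat.lt_floor_add_one ((n:ℝ)*t)
      constructor <;> [linarith; linarith]
  rw [Finset.sum_eq_single_of_mem (⟨k0, hk0n⟩ : Fin n) (Finset.mem_univ _)]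
  · rw [if_pos ((hcondk k0 hk0n).mpr rfl)]
  · intro b _ hb
    rw [if_neg]
    intro hcond
    exact hb (Fin.ext ((hcondk b.val b.isLt).mp hcond))

open scoped InnerProductSpace in
lemma shift_adjoint_comp {n j k : ℕ} (hn : 0 < n) (hj : j < n) (hk : k < n)
    {A B : L2I →L[ℂ] L2I} (hA : IsShiftOp n j A) (hB : IsShiftOp n k B) :
    (ContinuousLinearMap.adjoint A).comp B =
      if j = k then ContinuousLinearMap.id ℂ L2I else 0 := by
  refine ContinuousLinearMap.ext fun ξ => ?_
  refine ext_inner_right ℂ fun η => ?_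
  rw [ContinuousLinearMap.comp_apply, ContinuousLinearMap.adjoint_inner_left,
    inner_shift hn hk hj hB hA ξ η]
  by_cases h : j = k
  · subst h
    simp
  · rw [if_neg (fun h' => h h'.symm), if_neg h]
    simp

variable {P : Type} [Monoid P]

/-- The lexicographic multiplication on the fibers `ℂ^{d(s)}` of the lexicographic
product system `E(d)`: the bilinear extension of `δ_j · δ_k = δ_{j·d(t)+k}`. -/
def lexMul (d : P →* ℕ+) {s t : P} (x : Fin (d s : ℕ) → ℂ) (y : Fin (d t : ℕ) → ℂ) :
    Fin (d (s * t) : ℕ) → ℂ :=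
  fun i : Fin (d (s * t) : ℕ) =>
    x ⟨i.val / (d t : ℕ), by
        rw [Nat.div_lt_iff_lt_mul (d t).pos]
        exact lt_of_lt_of_eq i.isLt (by rw [map_mul, PNat.mul_coe])⟩ *
    y ⟨i.val % (d t : ℕ), Nat.mod_lt _ (d t).pos⟩

open scoped InnerProductSpace

/-- Let `P` be a monoid and `d : P → ℕ*` a monoid homomorphism to the
positive integers under multiplication.  For `r ∈ P` and `x ∈ ℂ^{d(r)}` define
`S_r(x) := Σ_{j=0}^{d(r)−1} (x | δ_j) · S_{d(r),j}` on `L²([0,1))`.  Then `S` is a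
nontrivial Cuntz representation of the lexicographic product system `E(d)` in the
C*-algebra of bounded operators on `L²([0,1))`: each `S_r` is linear,
`S_{rs}(x·y) = S_r(x) ∘ S_s(y)`, `S_r(y)* ∘ S_r(x) = (x|y)·id` (where
`(x|y) = Σ_j conj(y_j)·x_j`), and `Σ_j S_r(δ_j) ∘ S_r(δ_j)* = id` for every `r ∈ P`. -/
theorem stmt19 (d : P →* ℕ+) (Sop : ℕ → ℕ → (L2I →L[ℂ] L2I))
    (hSop : ∀ n j : ℕ, 1 ≤ n → j < n → IsShiftOp n j (Sop n j))
    (S : ∀ r : P, (Fin (d r : ℕ) → ℂ) → (L2I →L[ℂ] L2I))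
    (hS : ∀ (r : P) (x : Fin (d r : ℕ) → ℂ),
      S r x = ∑ j : Fin (d r : ℕ), x j • Sop (d r : ℕ) j.val) :
    (∀ (r : P) (a : ℂ) (x y : Fin (d r : ℕ) → ℂ),
      S r (a • x + y) = a • S r x + S r y) ∧
    (∀ (r s : P) (x : Fin (d r : ℕ) → ℂ) (y : Fin (d s : ℕ) → ℂ),
      S (r * s) (lexMul d x y) = (S r x).comp (S s y)) ∧
    (∀ (r : P) (x y : Fin (d r : ℕ) → ℂ),
      (ContinuousLinearMap.adjoint (S r y)).comp (S r x) =
        (∑ j : Fin (d r : ℕ), (starRingEnd ℂ) (y j) * x j) •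
          ContinuousLinearMap.id ℂ L2I) ∧
    (∀ r : P, ∑ j : Fin (d r : ℕ),
        (S r (Pi.single j 1)).comp (ContinuousLinearMap.adjoint (S r (Pi.single j 1))) =
      ContinuousLinearMap.id ℂ L2I) ∧
    (∃ (r : P) (x : Fin (d r : ℕ) → ℂ), S r x ≠ 0) := by
  classical
  -- part 1 : linearity
  have part1 : ∀ (r : P) (a : ℂ) (x y : Fin (d r : ℕ) → ℂ),
      S r (a • x + y) = a • S r x + S r y := by
    intro r a x y
    rw [hS, hS, hS, Finset.smul_sum, ← Finset.sum_add_distrib]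
    refine Finset.sum_congr rfl fun j _ => ?_
    simp [add_smul, smul_smul]
  -- part 3 : adjoint relation
  have part3 : ∀ (r : P) (x y : Fin (d r : ℕ) → ℂ),
      (ContinuousLinearMap.adjoint (S r y)).comp (S r x) =
        (∑ j : Fin (d r : ℕ), (starRingEnd ℂ) (y j) * x j) •
          ContinuousLinearMap.id ℂ L2I := by
    intro r x y
    have hn : 0 < (d r : ℕ) := (d r).pos
    refine ContinuousLinearMap.ext fun ξ => ?_
    refine ext_inner_right ℂ fun η => ?_
    rw [ContinuousLinearMap.comp_apply, ContinuousLinearMap.adjoint_inner_left, hS, hS]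
    have hjk : ∀ j k : Fin (d r : ℕ),
        ⟪Sop (d r : ℕ) j.val ξ, Sop (d r : ℕ) k.val η⟫_ℂ =
          if j = k then ⟪ξ, η⟫_ℂ else 0 := by
      intro j k
      rw [inner_shift hn j.isLt k.isLt (hSop _ _ hn j.isLt) (hSop _ _ hn k.isLt) ξ η]
      simp [Fin.val_eq_val]
    simp only [ContinuousLinearMap.sum_apply, ContinuousLinearMap.smul_apply, sum_inner,
      inner_sum, inner_smul_left, inner_smul_right, hjk, mul_ite, mul_zero,
      Finset.sum_ite_eq, Finset.mem_univ, if_true]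
    simp only [ContinuousLinearMap.smul_apply, ContinuousLinearMap.id_apply,
      inner_smul_left, map_sum, map_mul, RingHomCompTriple.comp_apply, Finset.sum_mul]
    refine Finset.sum_congr rfl fun j _ => ?_
    rw [Finset.sum_ite_eq' Finset.univ j (fun x1 => (starRingEnd ℂ) (x x1) * ⟪ξ, η⟫_ℂ),
      if_pos (Finset.mem_univ _), RingHom.id_apply]
    ring
  refine ⟨part1, ?_, part3, ?_, ?_⟩
  -- part 2 : multiplicativity
  · intro r s x y
    have hn : 0 < (d r : ℕ) := (d r).pos
    have hm : 0 < (d s : ℕ) := (d s).pos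
    have hN : ((d (r * s) : ℕ)) = (d r : ℕ) * (d s : ℕ) := by
      rw [map_mul, PNat.mul_coe]
    have hcomp : ∀ j k : ℕ, j < (d r : ℕ) → k < (d s : ℕ) →
        (Sop (d r : ℕ) j).comp (Sop (d s : ℕ) k) =
          Sop ((d r : ℕ) * (d s : ℕ)) (j * (d s : ℕ) + k) := by
      intro j k hj hk
      have hb : j * (d s : ℕ) + k < (d r : ℕ) * (d s : ℕ) := by
        calc j * (d s : ℕ) + k < j * (d s : ℕ) + (d s : ℕ) := by omega
          _ = (j + 1) * (d s : ℕ) := by ring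
          _ ≤ (d r : ℕ) * (d s : ℕ) := Nat.mul_le_mul_right _ (by omega)
      exact IsShiftOp.unique
        (shift_comp hn hm hj hk (hSop _ _ hn hj) (hSop _ _ hm hk))
        (hSop _ _ (Nat.mul_pos hn hm) hb)
    rw [hS, hS, hS, ContinuousLinearMap.finset_sum_comp]
    simp only [ContinuousLinearMap.comp_finset_sum, ContinuousLinearMap.smul_comp,
      ContinuousLinearMap.comp_smul, smul_smul]
    rw [← Finset.sum_product']
    refine Finset.sum_nbij' (fun a => (⟨a.val / (d s : ℕ), by
        rw [Nat.div_lt_iff_lt_mul (d s).pos]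
        exact lt_of_lt_of_eq a.isLt hN⟩,
        ⟨a.val % (d s : ℕ), Nat.mod_lt _ (d s).pos⟩))
      (fun p => ⟨p.1.val * (d s : ℕ) + p.2.val, by
        rw [hN]
        calc p.1.val * (d s : ℕ) + p.2.val < p.1.val * (d s : ℕ) + (d s : ℕ) := by omega
          _ = (p.1.val + 1) * (d s : ℕ) := by ring
          _ ≤ (d r : ℕ) * (d s : ℕ) := Nat.mul_le_mul_right _ p.1.isLt⟩)
      (fun a _ => Finset.mem_univ _) (fun p _ => Finset.mem_univ _)
      (fun a _ => by
        ext
        simp [Nat.div_add_mod'])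
      (fun p _ => by
        have h1 : (p.1.val * (d s : ℕ) + p.2.val) / (d s : ℕ) = p.1.val := by
          rw [mul_comm, Nat.mul_add_div hm, Nat.div_eq_of_lt p.2.isLt, add_zero]
        have h2 : (p.1.val * (d s : ℕ) + p.2.val) % (d s : ℕ) = p.2.val := by
          rw [add_comm, Nat.add_mul_mod_self_right, Nat.mod_eq_of_lt p.2.isLt]
        ext
        · exact h1
        · exact h2)
      (fun a _ => by
        have hop : Sop ((d (r * s) : ℕ)) = Sop ((d r : ℕ) * (d s : ℕ)) := by rw [hN]
        rw [hcomp _ _ (by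
            rw [Nat.div_lt_iff_lt_mul (d s).pos]
            exact lt_of_lt_of_eq a.isLt hN) (Nat.mod_lt _ (d s).pos),
          Nat.div_add_mod', hop]
        simp only [lexMul]
        rw [mul_comm])
  -- part 4 : Cuntz relation
  · intro r
    have hn : 0 < (d r : ℕ) := (d r).pos
    have hsingle : ∀ j : Fin (d r : ℕ), S r (Pi.single j 1) = Sop (d r : ℕ) j.val := by
      intro j
      rw [hS]
      rw [Finset.sum_eq_single_of_mem j (Finset.mem_univ _)]
      · simp
      · intro b _ hb
        rw [Pi.single_eq_of_ne hb, zero_smul]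
    simp only [hsingle]
    have hadj : ∀ j k : Fin (d r : ℕ),
        (ContinuousLinearMap.adjoint (Sop (d r : ℕ) j.val)).comp (Sop (d r : ℕ) k.val) =
          if j = k then ContinuousLinearMap.id ℂ L2I else 0 := by
      intro j k
      rw [shift_adjoint_comp hn j.isLt k.isLt (hSop _ _ hn j.isLt) (hSop _ _ hn k.isLt)]
      simp [Fin.val_eq_val]
    refine ContinuousLinearMap.ext fun ξ => ?_
    obtain ⟨c, hc⟩ := exists_decomp hn (T := Sop (d r : ℕ))
      (fun k hk => hSop _ _ hn hk) ξ
    have hadj_apply : ∀ j : Fin (d r : ℕ),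
        (ContinuousLinearMap.adjoint (Sop (d r : ℕ) j.val)) ξ = c j := by
      intro j
      conv_lhs => rw [hc]
      rw [map_sum]
      have : ∀ k : Fin (d r : ℕ),
          (ContinuousLinearMap.adjoint (Sop (d r : ℕ) j.val)) (Sop (d r : ℕ) k.val (c k)) =
            if j = k then c k else 0 := by
        intro k
        have := congrArg (fun T : L2I →L[ℂ] L2I => T (c k)) (hadj j k)
        rw [ContinuousLinearMap.comp_apply] at this
        rw [this]
        by_cases h : j = k <;> simp [h]
      simp only [this, Finset.sum_ite_eq, Finset.mem_univ, if_true]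
    simp only [ContinuousLinearMap.sum_apply, ContinuousLinearMap.comp_apply, hadj_apply,
      ContinuousLinearMap.id_apply]
    exact hc.symm
  -- nontriviality
  · refine ⟨1, fun _ => (1:ℂ), ?_⟩
    intro h0
    have h3 := part3 1 (fun _ => (1:ℂ)) (fun _ => (1:ℂ))
    rw [h0] at h3
    simp only [ContinuousLinearMap.comp_zero, map_one, mul_one] at h3
    -- a nonzero element of L2I
    have hμuniv : μ01 Set.univ = 1 := by
      rw [Measure.restrict_apply_univ, Real.volume_Ico]
      norm_num
    have hμne : μ01 Set.univ ≠ ⊤ := by rw [hμuniv]; exact ENNReal.one_ne_top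
    set ξ0 : L2I := indicatorConstLp 2 MeasurableSet.univ hμne (1:ℂ) with hξ0def
    have hξ0 : ξ0 ≠ 0 := by
      intro h
      have hnorm : ‖ξ0‖ = ‖(1:ℂ)‖ * (μ01 Set.univ).toReal ^ (1 / (2:ENNReal).toReal) :=
        norm_indicatorConstLp (by norm_num) (by norm_num)
      rw [h, norm_zero, hμuniv] at hnorm
      simp at hnorm
    have := congrArg (fun T : L2I →L[ℂ] L2I => T ξ0) h3.symm
    simp only [ContinuousLinearMap.smul_apply, ContinuousLinearMap.id_apply,
      ContinuousLinearMap.zero_apply] at this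
    have hcard : ((Finset.univ.sum fun _ : Fin (d 1 : ℕ) => (starRingEnd ℂ) 1 * 1)) ≠ 0 := by
      simp
    rw [smul_eq_zero] at this
    rcases this with h | h
    · exact hcard (by simpa using h)
    · exact hξ0 h

end
end
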